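/- arXiv:2211.04565 — 5 statements merged into one kernel-verified Lean document; each statement's English description precedes it below -/
import Mathlib

section
/- Let α>0 and suppose W_α(x)=∫_0^x y^{α-1}(1−F(y))dy is regularly varying at infinity with index θ, where 0<θ≤α. Then x^α (1−F(x)) / W_α(x) → θ as x→∞; in particular 1−F is regularly varying with index θ−α. -/
open MeasureTheory Set Filter Topology

/-- The cumulative distribution function of a measure `μ` on `ℝ`. -/
noncomputable def distF (μ : Measure ℝ) (x : ℝ) : ℝ := (μ (Iic x)).toReal

/-- Truncated `α`-th moment `H_α(x) = ∫_{[0,x]} y^α dF(y)`. -/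
noncomputable def Htr (μ : Measure ℝ) (α x : ℝ) : ℝ := ∫ y in Iic x, y ^ α ∂μ

/-- `W_α(x) = ∫_0^x y^(α-1) (1 - F(y)) dy` (Lebesgue integral). -/
noncomputable def Wtr (μ : Measure ℝ) (α x : ℝ) : ℝ :=
  ∫ y in Ioc (0:ℝ) x, y ^ (α - 1) * (1 - distF μ y)

/-- The Williamson transform `G_α(x) = ∫_{[0,x]} (1 - (t/x)^α) dF(t)`. -/
noncomputable def Gw (μ : Measure ℝ) (α x : ℝ) : ℝ := ∫ t in Iic x, (1 - (t / x) ^ α) ∂μ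

/-- `g` is regularly varying at infinity with index `ρ`. -/
def RegVary (g : ℝ → ℝ) (ρ : ℝ) : Prop :=
  ∀ t : ℝ, 0 < t → Tendsto (fun x => g (t * x) / g x) atTop (𝓝 (t ^ ρ))

section Aux
set_option linter.unusedVariables false
set_option linter.unusedSectionVars false

variable (μ : Measure ℝ) [IsProbabilityMeasure μ]

lemma distF_mono : Monotone (distF μ) := fun a b hab =>
  ENNReal.toReal_mono (measure_ne_top μ _) (measure_mono (Iic_subset_Iic.2 hab))

lemma distF_nonneg (x : ℝ) : 0 ≤ distF μ x := ENNReal.toReal_nonneg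

lemma distF_le_one (x : ℝ) : distF μ x ≤ 1 := by
  have := measure_mono (μ := μ) (subset_univ (Iic x))
  simpa [distF] using ENNReal.toReal_mono (measure_ne_top μ _) this

lemma measurable_distF : Measurable (distF μ) := (distF_mono μ).measurable

lemma integrableOn_Wfn {α : ℝ} (hα : 0 < α) (x : ℝ) :
    IntegrableOn (fun y => y ^ (α - 1) * (1 - distF μ y)) (Ioc 0 x) := by
  rcases le_or_gt x 0 with hx | hx
  · rw [Ioc_eq_empty (by exact not_lt.2 hx)]; simp [IntegrableOn]
  have hint : IntegrableOn (fun y : ℝ => y ^ (α - 1)) (Ioc 0 x) := by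
    have : IntegrableOn (fun y : ℝ => y ^ (α - 1)) (Ioo 0 x) :=
      (intervalIntegral.integrableOn_Ioo_rpow_iff hx).2 (by linarith)
    rwa [IntegrableOn, Measure.restrict_congr_set Ioo_ae_eq_Ioc] at this
  refine Integrable.mono hint ?_ ?_
  · exact (((measurable_id.pow_const _).mul
      ((measurable_const.sub (measurable_distF μ)))).aestronglyMeasurable)
  · filter_upwards [ae_restrict_mem measurableSet_Ioc] with y hy
    have hy0 : 0 < y := hy.1
    have h1 : 0 ≤ 1 - distF μ y := by linarith [distF_le_one μ y]
    have h2 : 1 - distF μ y ≤ 1 := by linarith [distF_nonneg μ y]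
    have hr : 0 ≤ y ^ (α - 1) := Real.rpow_nonneg hy0.le _
    rw [Real.norm_eq_abs, Real.norm_eq_abs, abs_of_nonneg (mul_nonneg hr h1),
      abs_of_nonneg hr]
    nlinarith


lemma Wtr_sub {α s t : ℝ} (hα : 0 < α) (hs : 0 < s) (hst : s ≤ t) :
    Wtr μ α t - Wtr μ α s = ∫ y in Ioc s t, y ^ (α - 1) * (1 - distF μ y) := by
  have hu : Ioc (0:ℝ) s ∪ Ioc s t = Ioc 0 t := Ioc_union_Ioc_eq_Ioc hs.le hst
  have hI := integrableOn_Wfn μ hα t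
  rw [Wtr, Wtr, ← hu, setIntegral_union (Ioc_disjoint_Ioc_of_le le_rfl) measurableSet_Ioc
    (hI.mono_set (by rw [← hu]; exact subset_union_left))
    (hI.mono_set (by rw [← hu]; exact subset_union_right))]
  ring

open intervalIntegral in
lemma rpow_integral_Ioc {α s t : ℝ} (hα : 0 < α) (hst : s ≤ t) :
    ∫ y in Ioc s t, y ^ (α - 1) = (t ^ α - s ^ α) / α := by
  rw [← integral_of_le hst, integral_rpow (Or.inl (by linarith))]
  norm_num

lemma sandwich {α s t : ℝ} (hα : 0 < α) (hs : 0 < s) (hst : s ≤ t) :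
    (1 - distF μ t) * ((t ^ α - s ^ α) / α) ≤ Wtr μ α t - Wtr μ α s ∧
      Wtr μ α t - Wtr μ α s ≤ (1 - distF μ s) * ((t ^ α - s ^ α) / α) := by
  have hIr : IntegrableOn (fun y : ℝ => y ^ (α - 1)) (Ioc s t) := by
    exact (intervalIntegral.intervalIntegrable_rpow' (a := s) (b := t) (by linarith)).1
  have hIf : IntegrableOn (fun y => y ^ (α - 1) * (1 - distF μ y)) (Ioc s t) :=
    (integrableOn_Wfn μ hα t).mono_set (Ioc_subset_Ioc hs.le le_rfl)
  have key : ∀ c : ℝ, ∫ y in Ioc s t, c * y ^ (α - 1) = c * ((t ^ α - s ^ α) / α) := by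
    intro c; rw [integral_const_mul, rpow_integral_Ioc hα hst]
  rw [Wtr_sub μ hα hs hst]
  constructor
  · calc (1 - distF μ t) * ((t ^ α - s ^ α) / α)
        = ∫ y in Ioc s t, (1 - distF μ t) * y ^ (α - 1) := (key _).symm
      _ ≤ _ := by
          refine setIntegral_mono_on (hIr.const_mul _) hIf measurableSet_Ioc ?_
          intro y hy
          have : distF μ y ≤ distF μ t := distF_mono μ hy.2
          have hr : 0 ≤ y ^ (α - 1) := Real.rpow_nonneg (hs.trans hy.1).le _
          rw [mul_comm]
          exact mul_le_mul_of_nonneg_left (by linarith) hr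
  · calc _ ≤ ∫ y in Ioc s t, (1 - distF μ s) * y ^ (α - 1) := by
          refine setIntegral_mono_on hIf (hIr.const_mul _) measurableSet_Ioc ?_
          intro y hy
          have : distF μ s ≤ distF μ y := distF_mono μ hy.1.le
          have hr : 0 ≤ y ^ (α - 1) := Real.rpow_nonneg (hs.trans hy.1).le _
          rw [mul_comm (1 - distF μ s)]
          exact mul_le_mul_of_nonneg_left (by linarith) hr
      _ = _ := key _

lemma ddd {a b d : ℝ} (hd : d ≠ 0) : (a / d) / (b / d) = a / b := by
  rcases eq_or_ne b 0 with rfl | hb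
  · simp
  · field_simp

lemma tendsto_slope_rpow (p : ℝ) :
    Tendsto (fun b : ℝ => (b ^ p - 1) / (b - 1)) (𝓝[≠] (1:ℝ)) (𝓝 p) := by
  have h : HasDerivAt (fun x : ℝ => x ^ p) (p * (1:ℝ) ^ (p - 1)) 1 :=
    Real.hasDerivAt_rpow_const (Or.inl one_ne_zero)
  have h2 := hasDerivAt_iff_tendsto_slope.1 h
  rw [Real.one_rpow, mul_one] at h2
  refine h2.congr fun b => ?_
  simp [slope_def_field, div_eq_inv_mul, Real.one_rpow]

lemma tendsto_L {α θ : ℝ} (hα : α ≠ 0) :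
    Tendsto (fun b : ℝ => (b ^ θ - 1) / (b ^ α - 1)) (𝓝[>] (1:ℝ)) (𝓝 (θ / α)) := by
  have h := (tendsto_slope_rpow θ).div (tendsto_slope_rpow α) hα
  have he : ∀ᶠ b in 𝓝[≠] (1:ℝ),
      ((b ^ θ - 1) / (b - 1)) / ((b ^ α - 1) / (b - 1)) = (b ^ θ - 1) / (b ^ α - 1) := by
    filter_upwards [self_mem_nhdsWithin] with b hb
    exact ddd (sub_ne_zero.2 hb)
  exact (h.congr' he).mono_left (nhdsWithin_mono _ fun x hx => ne_of_gt hx)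

lemma tendsto_cprime {α θ : ℝ} (hα : α ≠ 0) :
    Tendsto (fun b : ℝ => α * ((b ^ θ - 1) / (b ^ α - 1))) (𝓝[>] (1:ℝ)) (𝓝 θ) := by
  have := (tendsto_L (θ := θ) hα).const_mul α
  rwa [mul_div_cancel₀ _ hα] at this

lemma tendsto_rpow_one (p : ℝ) :
    Tendsto (fun b : ℝ => b ^ p) (𝓝[>] (1:ℝ)) (𝓝 1) := by
  have : ContinuousAt (fun b : ℝ => b ^ p) 1 :=
    Real.continuousAt_rpow_const 1 p (Or.inl one_ne_zero)
  simpa [Real.one_rpow] using this.continuousWithinAt.tendsto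

lemma tendsto_cb {α θ : ℝ} (hα : α ≠ 0) (hθ : 0 < θ) :
    Tendsto (fun b : ℝ => α * ((1 - (b ^ θ)⁻¹) / (1 - (b ^ α)⁻¹))) (𝓝[>] (1:ℝ)) (𝓝 θ) := by
  have h1 : Tendsto (fun b : ℝ => α * ((b ^ θ - 1) / (b ^ α - 1)) * (b ^ α / b ^ θ))
      (𝓝[>] (1:ℝ)) (𝓝 θ) := by
    have := (tendsto_cprime (θ := θ) hα).mul ((tendsto_rpow_one α).div (tendsto_rpow_one θ)
      one_ne_zero)
    simpa using this
  refine h1.congr' ?_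
  filter_upwards [self_mem_nhdsWithin] with b (hb : 1 < b)
  have hb0 : 0 < b := lt_trans one_pos hb
  have hbt : b ^ θ ≠ 0 := (Real.rpow_pos_of_pos hb0 θ).ne'
  have hba : b ^ α ≠ 0 := (Real.rpow_pos_of_pos hb0 α).ne'
  field_simp

lemma Wtr_nonneg {α : ℝ} (x : ℝ) : 0 ≤ Wtr μ α x :=
  setIntegral_nonneg measurableSet_Ioc fun y hy =>
    mul_nonneg (Real.rpow_nonneg hy.1.le _) (by linarith [distF_le_one μ y])


end Aux

theorem stmt6 (μ : Measure ℝ) [IsProbabilityMeasure μ] (hsupp : μ (Iic 0) = 0)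
    (α θ : ℝ) (hα : 0 < α) (hθ : 0 < θ) (hθα : θ ≤ α)
    (hW : RegVary (Wtr μ α) θ) :
    Tendsto (fun x => x ^ α * (1 - distF μ x) / Wtr μ α x) atTop (𝓝 θ) ∧
      RegVary (fun x => 1 - distF μ x) (θ - α) := by
  have hWpos : ∀ᶠ x in atTop, 0 < Wtr μ α x := by
    have h2 : ∀ᶠ x in atTop, 0 < Wtr μ α (2 * x) / Wtr μ α x :=
      (hW 2 two_pos).eventually (eventually_gt_nhds (Real.rpow_pos_of_pos two_pos θ))
    filter_upwards [h2] with x hx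
    rcases lt_or_eq_of_le (Wtr_nonneg μ (α := α) x) with h | h
    · exact h
    · rw [← h, div_zero] at hx; exact absurd hx (lt_irrefl 0)
  have hmain : Tendsto (fun x => x ^ α * (1 - distF μ x) / Wtr μ α x) atTop (𝓝 θ) := by
    rw [tendsto_order]
    constructor
    · intro c hc
      obtain ⟨b, hbP, hb1⟩ : ∃ b : ℝ, c < α * ((b ^ θ - 1) / (b ^ α - 1)) ∧ b ∈ Ioi (1:ℝ) :=
        (((tendsto_cprime (θ := θ) hα.ne').eventually (eventually_gt_nhds hc)).and
          self_mem_nhdsWithin).exists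
      replace hb1 : (1:ℝ) < b := hb1
      have hb0 : (0:ℝ) < b := one_pos.trans hb1
      have hba1 : 1 < b ^ α := (Real.one_lt_rpow_iff_of_pos hb0).2 (Or.inl ⟨hb1, hα⟩)
      have hg : Tendsto (fun y => α * ((Wtr μ α (b * y) / Wtr μ α y - 1) / (b ^ α - 1)))
          atTop (𝓝 (α * ((b ^ θ - 1) / (b ^ α - 1)))) :=
        (((hW b hb0).sub_const 1).div_const _).const_mul α
      have h1 := hg.eventually (eventually_gt_nhds hbP)
      filter_upwards [h1, hWpos, eventually_gt_atTop 0] with y hy1 hy2 hy3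
      refine lt_of_lt_of_le hy1 ?_
      have hsand := (sandwich μ hα hy3 (le_mul_of_one_le_left hy3.le hb1.le)).2
      have hmul : (b * y) ^ α = b ^ α * y ^ α := Real.mul_rpow hb0.le hy3.le
      rw [hmul] at hsand
      have hypos : 0 < y ^ α := Real.rpow_pos_of_pos hy3 α
      have key : (Wtr μ α (b * y) - Wtr μ α y) * α
          ≤ (1 - distF μ y) * (y ^ α * (b ^ α - 1)) := by
        rw [← le_div_iff₀ hα]
        exact le_trans hsand (le_of_eq (by ring))
      have e1 : α * ((Wtr μ α (b * y) / Wtr μ α y - 1) / (b ^ α - 1))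
          = (α * (Wtr μ α (b * y) - Wtr μ α y)) / ((b ^ α - 1) * Wtr μ α y) := by
        field_simp
      rw [e1, div_le_div_iff₀ (mul_pos (by linarith) hy2) hy2]
      nlinarith [mul_le_mul_of_nonneg_right key hy2.le]
    · intro c hc
      obtain ⟨b, hbP, hb1⟩ : ∃ b : ℝ, α * ((1 - (b ^ θ)⁻¹) / (1 - (b ^ α)⁻¹)) < c
          ∧ b ∈ Ioi (1:ℝ) :=
        (((tendsto_cb hα.ne' hθ).eventually (eventually_lt_nhds hc)).and
          self_mem_nhdsWithin).exists
      replace hb1 : (1:ℝ) < b := hb1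
      have hb0 : (0:ℝ) < b := one_pos.trans hb1
      have hba1 : 1 < b ^ α := (Real.one_lt_rpow_iff_of_pos hb0).2 (Or.inl ⟨hb1, hα⟩)
      have hg : Tendsto (fun y => α * ((1 - Wtr μ α (b⁻¹ * y) / Wtr μ α y) / (1 - (b ^ α)⁻¹)))
          atTop (𝓝 (α * ((1 - (b ^ θ)⁻¹) / (1 - (b ^ α)⁻¹)))) := by
        have h0 := hW b⁻¹ (inv_pos.2 hb0)
        rw [Real.inv_rpow hb0.le] at h0
        exact ((tendsto_const_nhds.sub h0).div_const _).const_mul α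
      have h1 := hg.eventually (eventually_lt_nhds hbP)
      filter_upwards [h1, hWpos, eventually_gt_atTop 0] with y hy1 hy2 hy3
      refine lt_of_le_of_lt ?_ hy1
      have hyb : 0 < b⁻¹ * y := by positivity
      have hle : b⁻¹ * y ≤ y := by
        have : b⁻¹ ≤ 1 := inv_le_one_of_one_le₀ hb1.le
        nlinarith
      have hsand := (sandwich μ hα hyb hle).1
      have hmul : (b⁻¹ * y) ^ α = (b ^ α)⁻¹ * y ^ α := by
        rw [Real.mul_rpow (inv_nonneg.2 hb0.le) hy3.le, Real.inv_rpow hb0.le]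
      rw [hmul] at hsand
      have hypos : 0 < y ^ α := Real.rpow_pos_of_pos hy3 α
      have hinv1 : (b ^ α)⁻¹ < 1 := inv_lt_one_of_one_lt₀ hba1
      have key : (1 - distF μ y) * (y ^ α * (1 - (b ^ α)⁻¹))
          ≤ (Wtr μ α y - Wtr μ α (b⁻¹ * y)) * α := by
        rw [← div_le_iff₀ hα]
        exact le_trans (le_of_eq (by ring)) hsand
      have e1 : α * ((1 - Wtr μ α (b⁻¹ * y) / Wtr μ α y) / (1 - (b ^ α)⁻¹))
          = (α * (Wtr μ α y - Wtr μ α (b⁻¹ * y))) / ((1 - (b ^ α)⁻¹) * Wtr μ α y) := by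
        field_simp
      rw [e1, div_le_div_iff₀ hy2 (mul_pos (by linarith) hy2)]
      nlinarith [mul_le_mul_of_nonneg_right key hy2.le]
  refine ⟨hmain, ?_⟩
  intro t ht
  have hUpos : ∀ᶠ x in atTop, 0 < 1 - distF μ x := by
    filter_upwards [hmain.eventually (eventually_gt_nhds (by linarith : θ/2 < θ)), hWpos,
      eventually_gt_atTop 0] with x h1 h2 h3
    by_contra h
    push_neg at h
    have hx : (0:ℝ) < x ^ α := Real.rpow_pos_of_pos h3 α
    have hnum : x ^ α * (1 - distF μ x) ≤ 0 := mul_nonpos_iff.2 (Or.inl ⟨hx.le, h⟩)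
    have : x ^ α * (1 - distF μ x) / Wtr μ α x ≤ 0 :=
      div_nonpos_of_nonpos_of_nonneg hnum h2.le
    linarith
  have hcomp : Tendsto (fun x : ℝ => t * x) atTop atTop := by
    exact Tendsto.const_mul_atTop ht tendsto_id
  have hA : Tendsto (fun x => (t * x) ^ α * (1 - distF μ (t * x)) / Wtr μ α (t * x))
      atTop (𝓝 θ) := hmain.comp hcomp
  have hE : Tendsto (fun x => ((t * x) ^ α * (1 - distF μ (t * x)) / Wtr μ α (t * x)) /
      (x ^ α * (1 - distF μ x) / Wtr μ α x) * (Wtr μ α (t * x) / Wtr μ α x) * (t ^ α)⁻¹)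
      atTop (𝓝 (θ / θ * t ^ θ * (t ^ α)⁻¹)) :=
    ((hA.div hmain hθ.ne').mul (hW t ht)).mul tendsto_const_nhds
  rw [div_self hθ.ne', one_mul] at hE
  have hlim : t ^ θ * (t ^ α)⁻¹ = t ^ (θ - α) := by
    rw [Real.rpow_sub ht, div_eq_mul_inv]
  rw [hlim] at hE
  refine hE.congr' ?_
  filter_upwards [hWpos, hUpos, hcomp.eventually hWpos, eventually_gt_atTop 0]
    with x h1 h2 h3 h4
  have hmul : (t * x) ^ α = t ^ α * x ^ α := Real.mul_rpow ht.le h4.le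
  have hx : (0:ℝ) < x ^ α := Real.rpow_pos_of_pos h4 α
  have htp : (0:ℝ) < t ^ α := Real.rpow_pos_of_pos ht α
  rw [hmul]
  field_simp
end

section
/- Let α>0 and suppose W_α(x)=∫_0^x y^{α-1}(1−F(y))dy is slowly varying at infinity. Then x^α (1−F(x)) / W_α(x) → 0 as x→∞. -/
open MeasureTheory Set Filter Topology

section Aux

variable (μ : Measure ℝ) [IsProbabilityMeasure μ]

lemma wf_meas (α : ℝ) : Measurable (fun y : ℝ => y ^ (α - 1) * (1 - distF μ y)) := by
  have h1 : Measurable fun y : ℝ => y ^ (α - 1) := by fun_prop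
  exact h1.mul (measurable_const.sub (distF_mono μ).measurable)

lemma wf_int {α : ℝ} (hα : 0 < α) (x : ℝ) :
    IntegrableOn (fun y : ℝ => y ^ (α - 1) * (1 - distF μ y)) (Ioc 0 x) := by
  have hr : IntegrableOn (fun y : ℝ => y ^ (α - 1)) (Ioc 0 x) :=
    (intervalIntegral.intervalIntegrable_rpow' (a := 0) (b := x) (by linarith)).1
  refine hr.mono' ((wf_meas μ α).aestronglyMeasurable.restrict) ?_
  filter_upwards [ae_restrict_mem measurableSet_Ioc] with y hy
  have h0 : (0:ℝ) ≤ y ^ (α - 1) := Real.rpow_nonneg hy.1.le _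
  have h1 : 0 ≤ 1 - distF μ y := sub_nonneg.2 (distF_le_one μ y)
  have h2 : 1 - distF μ y ≤ 1 := by linarith [distF_nonneg μ y]
  rw [Real.norm_eq_abs, abs_of_nonneg (mul_nonneg h0 h1)]
  exact mul_le_of_le_one_right h0 h2

lemma Wtr_add {α : ℝ} (hα : 0 < α) {a b : ℝ} (ha : 0 ≤ a) (hab : a ≤ b) :
    Wtr μ α b = Wtr μ α a + ∫ y in Ioc a b, y ^ (α - 1) * (1 - distF μ y) := by
  rw [Wtr, Wtr, ← setIntegral_union (Ioc_disjoint_Ioc_of_le le_rfl) measurableSet_Ioc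
      (wf_int μ hα a) ((wf_int μ hα b).mono_set (Ioc_subset_Ioc_left ha)),
    Ioc_union_Ioc_eq_Ioc ha hab]

lemma Wtr_key {α : ℝ} (hα : 0 < α) {x : ℝ} (hx : 0 < x) :
    (1 - distF μ x) * (x ^ α * (1 - (2:ℝ)⁻¹ ^ α) / α) ≤ Wtr μ α x - Wtr μ α (2⁻¹ * x) := by
  have hhalf : (0:ℝ) < 2⁻¹ * x := by positivity
  have hle : 2⁻¹ * x ≤ x := by linarith
  have hdiff : Wtr μ α x - Wtr μ α (2⁻¹ * x)
      = ∫ y in Ioc (2⁻¹ * x) x, y ^ (α - 1) * (1 - distF μ y) := by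
    rw [Wtr_add μ hα hhalf.le hle]; ring
  rw [hdiff]
  have hrint : IntegrableOn (fun y : ℝ => y ^ (α - 1)) (Ioc (2⁻¹ * x) x) :=
    (intervalIntegral.intervalIntegrable_rpow' (a := 2⁻¹ * x) (b := x) (by linarith)).1
  have hint : ∫ y in Ioc (2⁻¹ * x) x, y ^ (α - 1) = x ^ α * (1 - (2:ℝ)⁻¹ ^ α) / α := by
    rw [← intervalIntegral.integral_of_le hle, integral_rpow (Or.inl (by linarith))]
    rw [show α - 1 + 1 = α by ring, Real.mul_rpow (by norm_num) hx.le]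
    ring
  calc (1 - distF μ x) * (x ^ α * (1 - (2:ℝ)⁻¹ ^ α) / α)
      = ∫ y in Ioc (2⁻¹ * x) x, y ^ (α - 1) * (1 - distF μ x) := by
        rw [integral_mul_const, hint]; ring
    _ ≤ ∫ y in Ioc (2⁻¹ * x) x, y ^ (α - 1) * (1 - distF μ y) := by
        refine setIntegral_mono_on (hrint.mul_const _)
          ((wf_int μ hα x).mono_set (Ioc_subset_Ioc_left hhalf.le)) measurableSet_Ioc ?_
        intro y hy
        exact mul_le_mul_of_nonneg_left
          (sub_le_sub_left (distF_mono μ hy.2) 1) (Real.rpow_nonneg (hhalf.trans hy.1).le _)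

lemma Wtr_pos (hsupp : μ (Iic 0) = 0) {α : ℝ} (hα : 0 < α) :
    ∃ b > 0, ∀ x, b ≤ x → b ^ α / (2 * α) ≤ Wtr μ α x := by
  -- find b > 0 with μ (Ioc 0 b) ≤ 1/2
  obtain ⟨b, hb, hμb⟩ : ∃ b > 0, μ (Ioc (0:ℝ) b) ≤ 1/2 := by
    have hanti : Antitone fun n : ℕ => Ioc (0:ℝ) (1 / (n + 1)) := by
      intro m n hmn
      refine Ioc_subset_Ioc_right ?_
      have : (m:ℝ) + 1 ≤ (n:ℝ) + 1 := by exact_mod_cast by omega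
      exact one_div_le_one_div_of_le (by positivity) this
    have hint : (⋂ n : ℕ, Ioc (0:ℝ) (1 / (n + 1))) = ∅ := by
      ext y
      simp only [mem_iInter, mem_Ioc, mem_empty_iff_false, iff_false, not_forall, not_and]
      rcases le_or_gt y 0 with hy | hy
      · exact ⟨0, fun h => absurd h (not_lt.2 hy)⟩
      · obtain ⟨n, hn⟩ := exists_nat_gt (1 / y)
        refine ⟨n, fun _ => ?_⟩
        rw [div_lt_iff₀ hy] at hn
        rw [not_le, div_lt_iff₀ (by positivity)]
        nlinarith
    have ht := tendsto_measure_iInter_atTop (μ := μ)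
      (fun n => measurableSet_Ioc.nullMeasurableSet) hanti ⟨0, measure_ne_top μ _⟩
    rw [hint, measure_empty] at ht
    have hev := ht.eventually (eventually_le_nhds (by norm_num : (0:ENNReal) < 1/2))
    obtain ⟨n, hn⟩ := hev.exists
    exact ⟨1 / (n + 1), by positivity, hn⟩
  refine ⟨b, hb, fun x hx => ?_⟩
  -- F y ≤ 1/2 for y ∈ Ioc 0 b
  have hF : ∀ y ∈ Ioc (0:ℝ) b, distF μ y ≤ 1/2 := by
    intro y hy
    have hsub : Iic y ⊆ Iic 0 ∪ Ioc 0 b := by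
      intro z hz
      rcases le_or_gt z 0 with h | h
      · exact Or.inl h
      · exact Or.inr ⟨h, le_trans hz hy.2⟩
    have hm : μ (Iic y) ≤ 1/2 := by
      calc μ (Iic y) ≤ μ (Iic 0 ∪ Ioc 0 b) := measure_mono hsub
        _ ≤ μ (Iic 0) + μ (Ioc 0 b) := measure_union_le _ _
        _ ≤ 1/2 := by rw [hsupp, zero_add]; exact hμb
    have := ENNReal.toReal_mono (by norm_num) hm
    simpa [distF] using this.trans (by norm_num)
  -- W b ≥ b^α/(2α)
  have hWb : b ^ α / (2 * α) ≤ Wtr μ α b := by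
    have hrint : IntegrableOn (fun y : ℝ => y ^ (α - 1)) (Ioc 0 b) :=
      (intervalIntegral.intervalIntegrable_rpow' (a := 0) (b := b) (by linarith)).1
    have hint : ∫ y in Ioc (0:ℝ) b, y ^ (α - 1) * (1/2) = b ^ α / (2 * α) := by
      rw [integral_mul_const, ← intervalIntegral.integral_of_le hb.le,
        integral_rpow (Or.inl (by linarith)), show α - 1 + 1 = α by ring,
        Real.zero_rpow hα.ne']
      ring
    rw [Wtr, ← hint]
    refine setIntegral_mono_on (hrint.mul_const _) (wf_int μ hα b) measurableSet_Ioc ?_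
    intro y hy
    refine mul_le_mul_of_nonneg_left ?_ (Real.rpow_nonneg hy.1.le _)
    linarith [hF y hy]
  -- W x ≥ W b for x ≥ b
  have hmono : Wtr μ α b ≤ Wtr μ α x := by
    rw [Wtr_add μ hα hb.le hx]
    have : 0 ≤ ∫ y in Ioc b x, y ^ (α - 1) * (1 - distF μ y) := by
      refine setIntegral_nonneg measurableSet_Ioc fun y hy => ?_
      exact mul_nonneg (Real.rpow_nonneg (hb.trans hy.1).le _)
        (sub_nonneg.2 (distF_le_one μ y))
    linarith
  linarith

end Aux

theorem stmt7 (μ : Measure ℝ) [IsProbabilityMeasure μ] (hsupp : μ (Iic 0) = 0)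
    (α : ℝ) (hα : 0 < α)
    (hW : RegVary (Wtr μ α) 0) :
    Tendsto (fun x => x ^ α * (1 - distF μ x) / Wtr μ α x) atTop (𝓝 0) := by
  obtain ⟨b, hb, hbW⟩ := Wtr_pos μ hsupp hα
  have hWpos : ∀ x, b ≤ x → 0 < Wtr μ α x := fun x hx =>
    lt_of_lt_of_le (by positivity) (hbW x hx)
  have hk : 0 < 1 - (2:ℝ)⁻¹ ^ α :=
    sub_pos.2 (Real.rpow_lt_one (by norm_num) (by norm_num) hα)
  set c := α / (1 - (2:ℝ)⁻¹ ^ α) with hc_def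
  have hc : 0 < c := div_pos hα hk
  have hlim : Tendsto (fun x => c * (1 - Wtr μ α (2⁻¹ * x) / Wtr μ α x)) atTop (𝓝 0) := by
    have h2 := hW 2⁻¹ (by norm_num)
    rw [Real.rpow_zero] at h2
    have := ((tendsto_const_nhds (x := (1:ℝ))).sub h2).const_mul c
    simpa using this
  refine tendsto_of_tendsto_of_tendsto_of_le_of_le' tendsto_const_nhds hlim ?_ ?_
  · filter_upwards [eventually_ge_atTop (max b 1)] with x hx
    have hxb : b ≤ x := le_trans (le_max_left _ _) hx
    have hx0 : (0:ℝ) < x := lt_of_lt_of_le one_pos (le_trans (le_max_right _ _) hx)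
    exact div_nonneg (mul_nonneg (Real.rpow_nonneg hx0.le _)
      (sub_nonneg.2 (distF_le_one μ x))) (hWpos x hxb).le
  · filter_upwards [eventually_ge_atTop (max b 1)] with x hx
    have hxb : b ≤ x := le_trans (le_max_left _ _) hx
    have hx0 : (0:ℝ) < x := lt_of_lt_of_le one_pos (le_trans (le_max_right _ _) hx)
    have hWx := hWpos x hxb
    have key := Wtr_key μ hα hx0
    have hrw : c * (1 - Wtr μ α (2⁻¹ * x) / Wtr μ α x)
        = c * (Wtr μ α x - Wtr μ α (2⁻¹ * x)) / Wtr μ α x := by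
      field_simp
    rw [hrw, div_le_div_iff_of_pos_right hWx]
    have hmul : c * (x ^ α * (1 - (2:ℝ)⁻¹ ^ α) / α) = x ^ α := by
      rw [hc_def, div_mul_div_comm,
        show α * (x ^ α * (1 - (2:ℝ)⁻¹ ^ α)) = x ^ α * ((1 - (2:ℝ)⁻¹ ^ α) * α) from by ring]
      exact mul_div_cancel_right₀ _ (mul_pos hk hα).ne'
    calc x ^ α * (1 - distF μ x)
        = c * ((1 - distF μ x) * (x ^ α * (1 - (2:ℝ)⁻¹ ^ α) / α)) := by
          rw [show c * ((1 - distF μ x) * (x ^ α * (1 - (2:ℝ)⁻¹ ^ α) / α))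
              = (1 - distF μ x) * (c * (x ^ α * (1 - (2:ℝ)⁻¹ ^ α) / α)) from by ring, hmul]
          ring
      _ ≤ c * (Wtr μ α x - Wtr μ α (2⁻¹ * x)) :=
          mul_le_mul_of_nonneg_left key hc.le
end

section
/- Let α>0 and 0≤θ<α, and G_α the Williamson transform of F. Then H_α(x)=∫_{[0,x]} y^α dF(y) is regularly varying with index θ if and only if 1−G_α(x) is regularly varying with index θ−α, and either condition implies x^α (1−G_α(x)) / H_α(x) → α/(α−θ) as x→∞. -/
open MeasureTheory Set Filter Topology

noncomputable def Tf (μ : Measure ℝ) (α x : ℝ) : ℝ := x ^ α * (μ (Ioi x)).toReal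

lemma ae_pos (μ : Measure ℝ) (hsupp : μ (Iic 0) = 0) : ∀ᵐ y ∂μ, 0 < y := by
  rw [ae_iff]
  convert hsupp using 2
  ext y; simp [not_lt]

lemma ae_pos_restrict (μ : Measure ℝ) (hsupp : μ (Iic 0) = 0) (s : Set ℝ) :
    ∀ᵐ y ∂(μ.restrict s), 0 < y :=
  Eventually.filter_mono (ae_mono Measure.restrict_le_self) (ae_pos μ hsupp)

lemma rpow_aesm (μ : Measure ℝ) (α : ℝ) (hα : 0 < α) (s : Set ℝ) :
    AEStronglyMeasurable (fun y : ℝ => y ^ α) (μ.restrict s) :=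
  (Real.continuous_rpow_const hα.le).aestronglyMeasurable

lemma htr_integrableOn (μ : Measure ℝ) [IsProbabilityMeasure μ] (hsupp : μ (Iic 0) = 0)
    (α : ℝ) (hα : 0 < α) (x : ℝ) : IntegrableOn (fun y : ℝ => y ^ α) (Iic x) μ := by
  refine Integrable.mono' (integrable_const ((max x 1) ^ α)) (rpow_aesm μ α hα _) ?_
  filter_upwards [ae_pos_restrict μ hsupp _, ae_restrict_mem measurableSet_Iic] with y hy hyx
  rw [Real.norm_of_nonneg (Real.rpow_nonneg hy.le _)]
  exact Real.rpow_le_rpow hy.le (hyx.trans (le_max_left x 1)) hα.le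

lemma htr_nonneg (μ : Measure ℝ) (hsupp : μ (Iic 0) = 0) (α : ℝ) (x : ℝ) : 0 ≤ Htr μ α x := by
  refine integral_nonneg_of_ae ?_
  filter_upwards [ae_pos_restrict μ hsupp _] with y hy
  exact Real.rpow_nonneg hy.le _

lemma htr_diff (μ : Measure ℝ) [IsProbabilityMeasure μ] (hsupp : μ (Iic 0) = 0)
    (α : ℝ) (hα : 0 < α) {x y : ℝ} (hxy : x ≤ y) :
    Htr μ α y - Htr μ α x = ∫ t in Ioc x y, t ^ α ∂μ := by
  have : Htr μ α y = Htr μ α x + ∫ t in Ioc x y, t ^ α ∂μ := by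
    unfold Htr
    rw [← setIntegral_union (Iic_disjoint_Ioc le_rfl) measurableSet_Ioc
      (htr_integrableOn μ hsupp α hα x)
      ((htr_integrableOn μ hsupp α hα y).mono_set Ioc_subset_Iic_self),
      Iic_union_Ioc_eq_Iic hxy]
  linarith

lemma htr_mono (μ : Measure ℝ) [IsProbabilityMeasure μ] (hsupp : μ (Iic 0) = 0)
    (α : ℝ) (hα : 0 < α) {x y : ℝ} (hxy : x ≤ y) : Htr μ α x ≤ Htr μ α y := by
  have h := htr_diff μ hsupp α hα hxy
  have h2 : 0 ≤ ∫ t in Ioc x y, t ^ α ∂μ := by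
    refine integral_nonneg_of_ae ?_
    filter_upwards [ae_pos_restrict μ hsupp _] with t ht
    exact Real.rpow_nonneg ht.le _
  linarith

lemma htr_diff_bounds (μ : Measure ℝ) [IsProbabilityMeasure μ] (hsupp : μ (Iic 0) = 0)
    (α : ℝ) (hα : 0 < α) {x y : ℝ} (hx : 0 < x) (hxy : x ≤ y) :
    x ^ α * (μ (Ioc x y)).toReal ≤ Htr μ α y - Htr μ α x ∧
    Htr μ α y - Htr μ α x ≤ y ^ α * (μ (Ioc x y)).toReal := by
  rw [htr_diff μ hsupp α hα hxy]
  have hint : IntegrableOn (fun t : ℝ => t ^ α) (Ioc x y) μ :=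
    ((htr_integrableOn μ hsupp α hα y).mono_set Ioc_subset_Iic_self)
  have hmem := ae_restrict_mem (μ := μ) (s := Ioc x y) measurableSet_Ioc
  constructor
  · calc x ^ α * (μ (Ioc x y)).toReal = ∫ _ in Ioc x y, x ^ α ∂μ := by
          rw [setIntegral_const, smul_eq_mul, measureReal_def]; ring
      _ ≤ ∫ t in Ioc x y, t ^ α ∂μ := by
          refine integral_mono_ae (integrable_const _) hint ?_
          filter_upwards [hmem] with t ht
          exact Real.rpow_le_rpow hx.le ht.1.le hα.le
  · calc (∫ t in Ioc x y, t ^ α ∂μ) ≤ ∫ _ in Ioc x y, y ^ α ∂μ := by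
          refine integral_mono_ae hint (integrable_const _) ?_
          filter_upwards [hmem] with t ht
          exact Real.rpow_le_rpow ((hx.trans_le ht.1.le)).le ht.2 hα.le
      _ = y ^ α * (μ (Ioc x y)).toReal := by rw [setIntegral_const, smul_eq_mul, measureReal_def]; ring

lemma prob_split (μ : Measure ℝ) [IsProbabilityMeasure μ] (x : ℝ) :
    (μ (Iic x)).toReal + (μ (Ioi x)).toReal = 1 := by
  rw [← ENNReal.toReal_add (measure_ne_top μ _) (measure_ne_top μ _),
    ← measure_union (Iic_disjoint_Ioi le_rfl) measurableSet_Ioi, Iic_union_Ioi, measure_univ,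
    ENNReal.toReal_one]

lemma ioi_split (μ : Measure ℝ) [IsProbabilityMeasure μ] {x y : ℝ} (hxy : x ≤ y) :
    (μ (Ioi x)).toReal = (μ (Ioc x y)).toReal + (μ (Ioi y)).toReal := by
  rw [← ENNReal.toReal_add (measure_ne_top μ _) (measure_ne_top μ _),
    ← measure_union (Ioc_disjoint_Ioi le_rfl) measurableSet_Ioi, Ioc_union_Ioi_eq_Ioi hxy]

lemma uf_eq (μ : Measure ℝ) [IsProbabilityMeasure μ] (hsupp : μ (Iic 0) = 0)
    (α : ℝ) (hα : 0 < α) {x : ℝ} (hx : 0 < x) :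
    x ^ α * (1 - Gw μ α x) = Htr μ α x + Tf μ α x := by
  have hxp : (0:ℝ) < x ^ α := Real.rpow_pos_of_pos hx α
  have hint2 : IntegrableOn (fun t : ℝ => (t / x) ^ α) (Iic x) μ := by
    refine Integrable.mono' (integrable_const 1)
      ((Real.continuous_rpow_const hα.le).comp (continuous_id.div_const x)).aestronglyMeasurable ?_
    filter_upwards [ae_pos_restrict μ hsupp _, ae_restrict_mem measurableSet_Iic] with t ht htx
    rw [Real.norm_of_nonneg (Real.rpow_nonneg (div_nonneg ht.le hx.le) _)]
    exact Real.rpow_le_one (div_nonneg ht.le hx.le) ((div_le_one hx).mpr htx) hα.le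
  have key : Gw μ α x = (μ (Iic x)).toReal - Htr μ α x / x ^ α := by
    unfold Gw Htr
    rw [integral_sub (integrable_const 1) hint2]
    congr 1
    · rw [setIntegral_const, smul_eq_mul, mul_one, measureReal_def]
    · rw [← integral_div]
      refine integral_congr_ae ?_
      filter_upwards [ae_pos_restrict μ hsupp _] with t ht
      rw [Real.div_rpow ht.le hx.le]
  have hsplit := prob_split μ x
  rw [key]
  unfold Tf
  field_simp
  ring_nf
  nlinarith [htr_nonneg μ hsupp α x]

lemma tf_nonneg (μ : Measure ℝ) (α : ℝ) {x : ℝ} (hx : 0 < x) : 0 ≤ Tf μ α x :=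
  mul_nonneg (Real.rpow_pos_of_pos hx α).le ENNReal.toReal_nonneg

lemma step_up (μ : Measure ℝ) [IsProbabilityMeasure μ] (hsupp : μ (Iic 0) = 0)
    (α : ℝ) (hα : 0 < α) {x t : ℝ} (hx : 0 < x) (ht : 1 < t) :
    Tf μ α x ≤ (Htr μ α (t * x) - Htr μ α x) + (t ^ α)⁻¹ * Tf μ α (t * x) := by
  have ht0 : (0:ℝ) < t := lt_trans one_pos ht
  have hxt : x ≤ t * x := by nlinarith
  have hb := (htr_diff_bounds μ hsupp α hα hx hxt).1
  have hsplit := ioi_split μ hxt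
  have htα : (0:ℝ) < t ^ α := Real.rpow_pos_of_pos ht0 α
  have hmul : (t * x) ^ α = t ^ α * x ^ α := Real.mul_rpow ht0.le hx.le
  unfold Tf at *
  rw [hsplit, hmul]
  have : (t ^ α)⁻¹ * (t ^ α * x ^ α * (μ (Ioi (t * x))).toReal)
      = x ^ α * (μ (Ioi (t * x))).toReal := by field_simp
  rw [this]
  nlinarith [ENNReal.toReal_nonneg (a := μ (Ioi (t*x)))]

lemma step_down (μ : Measure ℝ) [IsProbabilityMeasure μ] (hsupp : μ (Iic 0) = 0)
    (α : ℝ) (hα : 0 < α) {x t : ℝ} (hx : 0 < x) (ht : 1 < t) :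
    (t ^ α)⁻¹ * (Htr μ α (t * x) - Htr μ α x) + (t ^ α)⁻¹ * Tf μ α (t * x) ≤ Tf μ α x := by
  have ht0 : (0:ℝ) < t := lt_trans one_pos ht
  have hxt : x ≤ t * x := by nlinarith
  have hb := (htr_diff_bounds μ hsupp α hα hx hxt).2
  have hsplit := ioi_split μ hxt
  have htα : (0:ℝ) < t ^ α := Real.rpow_pos_of_pos ht0 α
  have hmul : (t * x) ^ α = t ^ α * x ^ α := Real.mul_rpow ht0.le hx.le
  unfold Tf at *
  rw [hsplit, hmul]
  have h1 : (t ^ α)⁻¹ * (Htr μ α (t * x) - Htr μ α x)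
      ≤ x ^ α * (μ (Ioc x (t * x))).toReal := by
    rw [hmul] at hb
    rw [inv_mul_le_iff₀ htα]
    nlinarith
  have h2 : (t ^ α)⁻¹ * (t ^ α * x ^ α * (μ (Ioi (t * x))).toReal)
      = x ^ α * (μ (Ioi (t * x))).toReal := by field_simp
  rw [h2]
  nlinarith

lemma iter_up (μ : Measure ℝ) [IsProbabilityMeasure μ] (hsupp : μ (Iic 0) = 0)
    (α : ℝ) (hα : 0 < α) {t : ℝ} (ht : 1 < t) (N : ℕ) :
    ∀ x : ℝ, 0 < x → Tf μ α x ≤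
      (∑ k ∈ Finset.range N, ((t ^ α)⁻¹) ^ k * (Htr μ α (t ^ (k+1) * x) - Htr μ α (t ^ k * x)))
        + x ^ α * (μ (Ioi (t ^ N * x))).toReal := by
  have ht0 : (0:ℝ) < t := lt_trans one_pos ht
  have htα : (0:ℝ) < t ^ α := Real.rpow_pos_of_pos ht0 α
  induction N with
  | zero => intro x hx; simp [Tf]
  | succ N ih =>
    intro x hx
    have htx : 0 < t * x := by positivity
    have h0 := step_up μ hsupp α hα hx ht
    have hI := ih (t * x) htx
    have hpt : ∀ k : ℕ, t ^ k * (t * x) = t ^ (k+1) * x := by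
      intro k; ring
    rw [Finset.sum_range_succ'] ;
    simp only [pow_zero, one_mul, zero_add, pow_one]
    have hsum : (∑ k ∈ Finset.range N, ((t ^ α)⁻¹) ^ (k+1) * (Htr μ α (t ^ (k+1+1) * x) - Htr μ α (t ^ (k+1) * x)))
        = (t ^ α)⁻¹ * ∑ k ∈ Finset.range N, ((t ^ α)⁻¹) ^ k * (Htr μ α (t ^ (k+1) * (t*x)) - Htr μ α (t ^ k * (t*x))) := by
      rw [Finset.mul_sum]
      refine Finset.sum_congr rfl fun k _ => ?_
      rw [hpt, hpt]
      ring
    rw [hsum]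
    have hmul : (t * x) ^ α = t ^ α * x ^ α := Real.mul_rpow ht0.le hx.le
    have htail : (t ^ α)⁻¹ * ((t * x) ^ α * (μ (Ioi (t ^ N * (t * x)))).toReal)
        = x ^ α * (μ (Ioi (t ^ (N+1) * x))).toReal := by
      rw [hpt, hmul]; field_simp
    calc Tf μ α x ≤ (Htr μ α (t * x) - Htr μ α x) + (t ^ α)⁻¹ * Tf μ α (t * x) := h0
      _ ≤ (Htr μ α (t * x) - Htr μ α x) + (t ^ α)⁻¹ *
          ((∑ k ∈ Finset.range N, ((t ^ α)⁻¹) ^ k * (Htr μ α (t ^ (k+1) * (t*x)) - Htr μ α (t ^ k * (t*x))))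
            + (t * x) ^ α * (μ (Ioi (t ^ N * (t * x)))).toReal) := by
          have := mul_le_mul_of_nonneg_left hI (inv_nonneg.mpr htα.le)
          linarith
      _ = ((t ^ α)⁻¹ * ∑ k ∈ Finset.range N, ((t ^ α)⁻¹) ^ k * (Htr μ α (t ^ (k+1) * (t*x)) - Htr μ α (t ^ k * (t*x))))
            + (Htr μ α (t * x) - Htr μ α x) + x ^ α * (μ (Ioi (t ^ (N+1) * x))).toReal := by
          rw [← htail, mul_add]; ring
      _ = _ := by ring_nf

lemma iter_down (μ : Measure ℝ) [IsProbabilityMeasure μ] (hsupp : μ (Iic 0) = 0)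
    (α : ℝ) (hα : 0 < α) {t : ℝ} (ht : 1 < t) (N : ℕ) :
    ∀ x : ℝ, 0 < x →
      (∑ k ∈ Finset.range N, ((t ^ α)⁻¹) ^ (k+1) * (Htr μ α (t ^ (k+1) * x) - Htr μ α (t ^ k * x)))
        ≤ Tf μ α x := by
  have ht0 : (0:ℝ) < t := lt_trans one_pos ht
  have htα : (0:ℝ) < t ^ α := Real.rpow_pos_of_pos ht0 α
  induction N with
  | zero => intro x hx; simpa using tf_nonneg μ α hx
  | succ N ih =>
    intro x hx
    have htx : 0 < t * x := by positivity
    have h0 := step_down μ hsupp α hα hx ht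
    have hI := ih (t * x) htx
    have hpt : ∀ k : ℕ, t ^ k * (t * x) = t ^ (k+1) * x := by intro k; ring
    rw [Finset.sum_range_succ']
    simp only [pow_zero, one_mul]
    have hsum : (∑ k ∈ Finset.range N, ((t ^ α)⁻¹) ^ (k+1+1) * (Htr μ α (t ^ (k+1+1) * x) - Htr μ α (t ^ (k+1) * x)))
        = (t ^ α)⁻¹ * ∑ k ∈ Finset.range N, ((t ^ α)⁻¹) ^ (k+1) * (Htr μ α (t ^ (k+1) * (t*x)) - Htr μ α (t ^ k * (t*x))) := by
      rw [Finset.mul_sum]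
      refine Finset.sum_congr rfl fun k _ => ?_
      rw [hpt, hpt]
      ring
    rw [hsum]
    have h1 : (t ^ α)⁻¹ * ∑ k ∈ Finset.range N, ((t ^ α)⁻¹) ^ (k+1) * (Htr μ α (t ^ (k+1) * (t*x)) - Htr μ α (t ^ k * (t*x)))
        ≤ (t ^ α)⁻¹ * Tf μ α (t * x) :=
      mul_le_mul_of_nonneg_left hI (inv_nonneg.mpr htα.le)
    simp only [zero_add, pow_one]
    linarith

lemma eventually_scale {t : ℝ} (ht : 0 < t) {P : ℝ → Prop}
    (h : ∀ᶠ x in atTop, P (t * x)) : ∀ᶠ y in atTop, P y := by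
  rw [eventually_atTop] at h ⊢
  obtain ⟨N, hN⟩ := h
  refine ⟨t * N, fun y hy => ?_⟩
  have h1 : N ≤ y / t := by rw [le_div_iff₀ ht]; linarith [mul_comm t N]
  have h2 := hN (y / t) h1
  rwa [mul_comm, div_mul_cancel₀ _ ht.ne'] at h2

lemma htr_event_pos (μ : Measure ℝ) [IsProbabilityMeasure μ] (hsupp : μ (Iic 0) = 0)
    (α : ℝ) (hα : 0 < α) : ∃ b : ℝ, 1 ≤ b ∧ ∀ x, b ≤ x → 0 < Htr μ α x := by
  have h1 : Tendsto (fun x => μ (Iic x)) atTop (𝓝 (μ univ)) := tendsto_measure_Iic_atTop μ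
  have h2 : ∀ᶠ x in atTop, μ (Iic x) ≠ 0 := h1.eventually_ne (by simp)
  obtain ⟨b, hb1, hb2⟩ := (h2.and (eventually_ge_atTop (1:ℝ))).exists
  refine ⟨b, hb2, fun x hx => ?_⟩
  have hioc : μ (Ioc 0 b) ≠ 0 := by
    intro h0
    apply hb1
    have : μ (Iic b) ≤ μ (Iic 0) + μ (Ioc 0 b) := by
      rw [← Iic_union_Ioc_eq_Iic (le_trans zero_le_one hb2)]
      exact measure_union_le _ _
    rw [hsupp, h0] at this
    simpa using le_antisymm (by simpa using this) zero_le
  have hpos : 0 < Htr μ α b := by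
    rw [Htr, setIntegral_pos_iff_support_of_nonneg_ae ?hnn (htr_integrableOn μ hsupp α hα b)]
    case hnn =>
      filter_upwards [ae_pos_restrict μ hsupp _] with y hy
      exact Real.rpow_nonneg hy.le _
    refine lt_of_lt_of_le ?_ (measure_mono (?_ : Ioc 0 b ⊆ _))
    · exact pos_iff_ne_zero.mpr hioc
    · intro y hy
      exact ⟨ne_of_gt (Real.rpow_pos_of_pos hy.1 α), hy.2⟩
  exact lt_of_lt_of_le hpos (htr_mono μ hsupp α hα hx)

lemma tail_to_zero (μ : Measure ℝ) [IsProbabilityMeasure μ] {x t : ℝ} (hx : 0 < x) (ht : 1 < t)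
    (α : ℝ) : Tendsto (fun N : ℕ => x ^ α * (μ (Ioi (t ^ N * x))).toReal) atTop (𝓝 0) := by
  have hIic : Tendsto (fun y : ℝ => (μ (Iic y)).toReal) atTop (𝓝 1) := by
    have := tendsto_measure_Iic_atTop μ
    rw [measure_univ] at this
    have h2 := (ENNReal.tendsto_toReal (by simp : (1:ENNReal) ≠ ⊤)).comp this
    simpa [Function.comp_def] using h2
  have hcomp : Tendsto (fun N : ℕ => t ^ N * x) atTop atTop :=
    Tendsto.atTop_mul_const hx (tendsto_pow_atTop_atTop_of_one_lt ht)
  have h3 : Tendsto (fun N : ℕ => (μ (Iic (t ^ N * x))).toReal) atTop (𝓝 1) := hIic.comp hcomp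
  have h4 : Tendsto (fun N : ℕ => x ^ α * (1 - (μ (Iic (t ^ N * x))).toReal)) atTop (𝓝 0) := by
    have h4a := ((tendsto_const_nhds : Tendsto (fun _ : ℕ => (1:ℝ)) atTop (𝓝 1)).sub h3).const_mul (x ^ α)
    simpa using h4a
  refine h4.congr fun N => ?_
  have := prob_split μ (t ^ N * x)
  have : (μ (Ioi (t ^ N * x))).toReal = 1 - (μ (Iic (t ^ N * x))).toReal := by linarith
  rw [this]

lemma slope_lim (ρ : ℝ) : Tendsto (fun t : ℝ => (t ^ ρ - 1) / (t - 1)) (𝓝[>] (1:ℝ)) (𝓝 ρ) := by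
  have h : HasDerivAt (fun x : ℝ => x ^ ρ) (ρ * (1:ℝ) ^ (ρ - 1)) 1 :=
    Real.hasDerivAt_rpow_const (Or.inl one_ne_zero)
  rw [Real.one_rpow, mul_one] at h
  have h2 := hasDerivAt_iff_tendsto_slope.mp h
  have h3 := h2.mono_left (nhdsWithin_mono 1 (fun y hy => ne_of_gt hy : Ioi (1:ℝ) ⊆ {1}ᶜ))
  refine h3.congr fun y => ?_
  rw [slope_def_field, Real.one_rpow]

lemma ratio_lim {ρ σ : ℝ} (hσ : σ ≠ 0) :
    Tendsto (fun t : ℝ => (t ^ ρ - 1) / (t ^ σ - 1)) (𝓝[>] (1:ℝ)) (𝓝 (ρ / σ)) := by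
  have h := (slope_lim ρ).div (slope_lim σ) hσ
  refine Tendsto.congr' ?_ h
  filter_upwards [self_mem_nhdsWithin] with t (ht : 1 < t)
  have ht1 : t - 1 ≠ 0 := sub_ne_zero.mpr (ne_of_gt ht)
  rw [Pi.div_apply, div_div_div_cancel_right₀ ht1]

noncomputable def Uf (μ : Measure ℝ) (α x : ℝ) : ℝ := Htr μ α x + Tf μ α x

lemma eventually_scale' {t : ℝ} (ht : 0 < t) {P : ℝ → Prop}
    (h : ∀ᶠ x in atTop, P x) : ∀ᶠ x in atTop, P (t * x) :=
  (Tendsto.const_mul_atTop ht tendsto_id).eventually h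

lemma uf_event (μ : Measure ℝ) [IsProbabilityMeasure μ] (hsupp : μ (Iic 0) = 0)
    (α : ℝ) (hα : 0 < α) :
    ∀ᶠ x in atTop, 0 < x ∧ 0 < Htr μ α x ∧ 0 < Uf μ α x := by
  obtain ⟨b, hb1, hb2⟩ := htr_event_pos μ hsupp α hα
  filter_upwards [eventually_ge_atTop b, eventually_gt_atTop (0:ℝ)] with x hx h0
  have hH := hb2 x hx
  have hT := tf_nonneg μ α h0
  exact ⟨h0, hH, by unfold Uf; linarith⟩

lemma one_lt_rpow' {t α : ℝ} (ht : 1 < t) (hα : 0 < α) : 1 < t ^ α := by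
  exact (Real.one_lt_rpow_iff_of_pos (lt_trans one_pos ht)).mpr (Or.inl ⟨ht, hα⟩)

lemma sandwich_i (μ : Measure ℝ) [IsProbabilityMeasure μ] (hsupp : μ (Iic 0) = 0)
    (α : ℝ) (hα : 0 < α) {x t : ℝ} (hx : 0 < x) (ht : 1 < t) :
    (1 - (t ^ α)⁻¹) * Tf μ α (t * x) ≤ Uf μ α (t * x) - Uf μ α x := by
  have h := step_up μ hsupp α hα hx ht
  unfold Uf
  nlinarith [one_lt_rpow' ht hα]

lemma sandwich_ii (μ : Measure ℝ) [IsProbabilityMeasure μ] (hsupp : μ (Iic 0) = 0)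
    (α : ℝ) (hα : 0 < α) {x t : ℝ} (hx : 0 < x) (ht : 1 < t) :
    Uf μ α (t * x) - Uf μ α x ≤ (t ^ α - 1) * Tf μ α x := by
  have h := step_down μ hsupp α hα hx ht
  have ha : (0:ℝ) < t ^ α := Real.rpow_pos_of_pos (lt_trans one_pos ht) α
  unfold Uf
  have h2 : Htr μ α (t*x) - Htr μ α x + Tf μ α (t*x) ≤ t ^ α * Tf μ α x := by
    have := mul_le_mul_of_nonneg_left h ha.le
    rw [mul_add, ← mul_assoc, ← mul_assoc, mul_inv_cancel₀ ha.ne', one_mul, one_mul] at this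
    linarith
  linarith

lemma lemB (μ : Measure ℝ) [IsProbabilityMeasure μ] (hsupp : μ (Iic 0) = 0)
    {α θ : ℝ} (hα : 0 < α) (hθ : 0 ≤ θ) (hθα : θ < α)
    (hU : RegVary (Uf μ α) θ) :
    Tendsto (fun x => Tf μ α x / Uf μ α x) atTop (𝓝 (θ / α)) := by
  have hratio : Tendsto (fun t : ℝ => (t ^ θ - 1) / (t ^ α - 1)) (𝓝[>] (1:ℝ)) (𝓝 (θ/α)) :=
    ratio_lim hα.ne'
  rw [tendsto_order]
  constructor
  · -- lower bound
    intro l hl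
    obtain ⟨t, htl, ht1⟩ :=
      ((hratio.eventually (eventually_gt_nhds hl)).and self_mem_nhdsWithin).exists
    have ht0 : (0:ℝ) < t := lt_trans one_pos ht1
    have ha1 : 1 < t ^ α := one_lt_rpow' ht1 hα
    have hUt := hU t ht0
    have hexpr : Tendsto (fun x => (Uf μ α (t*x) / Uf μ α x - 1) / (t ^ α - 1)) atTop
        (𝓝 ((t ^ θ - 1) / (t ^ α - 1))) := (hUt.sub tendsto_const_nhds).div_const _
    filter_upwards [uf_event μ hsupp α hα, hexpr.eventually (eventually_gt_nhds htl),
      eventually_scale' ht0 (uf_event μ hsupp α hα)] with x hx hgt hxt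
    obtain ⟨hx0, hH, hUpos⟩ := hx
    refine lt_of_lt_of_le hgt ?_
    have hii := sandwich_ii μ hsupp α hα hx0 ht1
    rw [div_le_div_iff₀ (by linarith) hUpos]
    have h1 : Uf μ α (t*x) / Uf μ α x - 1 = (Uf μ α (t*x) - Uf μ α x) / Uf μ α x := by
      field_simp
    rw [h1, div_mul_eq_mul_div, div_le_iff₀ hUpos]
    nlinarith
  · -- upper bound
    intro u hu
    have hpow : Tendsto (fun t : ℝ => t ^ α / t ^ θ) (𝓝[>] (1:ℝ)) (𝓝 1) := by
      have hc : ContinuousAt (fun t : ℝ => t ^ α / t ^ θ) 1 := by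
        apply ContinuousAt.div
        · exact (Real.continuousAt_rpow_const 1 α (Or.inl one_ne_zero))
        · exact (Real.continuousAt_rpow_const 1 θ (Or.inl one_ne_zero))
        · simp [Real.one_rpow]
      have h2 : Tendsto (fun t : ℝ => t ^ α / t ^ θ) (𝓝[>] (1:ℝ)) (𝓝 ((1:ℝ) ^ α / (1:ℝ) ^ θ)) :=
        hc.tendsto.mono_left nhdsWithin_le_nhds
      simpa [Real.one_rpow] using h2
    have hB : Tendsto (fun t : ℝ => (1 - (t ^ θ)⁻¹) / (1 - (t ^ α)⁻¹)) (𝓝[>] (1:ℝ))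
        (𝓝 (θ/α)) := by
      have hmul := hratio.mul hpow
      rw [mul_comm] at hmul
      have hmul' : Tendsto (fun t : ℝ => (t ^ α / t ^ θ) * ((t ^ θ - 1) / (t ^ α - 1)))
          (𝓝[>] (1:ℝ)) (𝓝 (θ/α)) := by simpa [mul_comm] using hmul
      refine hmul'.congr' ?_
      filter_upwards [self_mem_nhdsWithin] with t (ht : 1 < t)
      have ht0 : (0:ℝ) < t := lt_trans one_pos ht
      have hθp : (0:ℝ) < t ^ θ := Real.rpow_pos_of_pos ht0 θ
      have hαp : (0:ℝ) < t ^ α := Real.rpow_pos_of_pos ht0 α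
      field_simp
    obtain ⟨t, htu, ht1⟩ :=
      ((hB.eventually (eventually_lt_nhds hu)).and self_mem_nhdsWithin).exists
    have ht0 : (0:ℝ) < t := lt_trans one_pos ht1
    have ha1 : 1 < t ^ α := one_lt_rpow' ht1 hα
    have hθp : (0:ℝ) < t ^ θ := Real.rpow_pos_of_pos ht0 θ
    have hUt := hU t ht0
    have hexpr : Tendsto (fun x => (1 - (Uf μ α (t*x) / Uf μ α x)⁻¹) / (1 - (t ^ α)⁻¹)) atTop
        (𝓝 ((1 - (t ^ θ)⁻¹) / (1 - (t ^ α)⁻¹))) := by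
      exact ((tendsto_const_nhds.sub (hUt.inv₀ hθp.ne')).div_const _)
    have key : ∀ᶠ x in atTop, Tf μ α (t*x) / Uf μ α (t*x) < u := by
      filter_upwards [uf_event μ hsupp α hα, hexpr.eventually (eventually_lt_nhds htu),
        eventually_scale' ht0 (uf_event μ hsupp α hα)] with x hx hlt hxt
      obtain ⟨hx0, hH, hUpos⟩ := hx
      obtain ⟨htx0, hHt, hUtpos⟩ := hxt
      refine lt_of_le_of_lt ?_ hlt
      have hi := sandwich_i μ hsupp α hα hx0 ht1
      have hinv : (Uf μ α (t*x) / Uf μ α x)⁻¹ = Uf μ α x / Uf μ α (t*x) := inv_div _ _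
      rw [hinv, div_le_div_iff₀ hUtpos (by simp; exact inv_lt_one_of_one_lt₀ ha1)]
      have h2 : 1 - Uf μ α x / Uf μ α (t*x) = (Uf μ α (t*x) - Uf μ α x) / Uf μ α (t*x) := by
        field_simp
      rw [h2, div_mul_eq_mul_div, le_div_iff₀ hUtpos]
      nlinarith
    exact eventually_scale ht0 key

lemma pow_rpow {t : ℝ} (ht : 0 ≤ t) (k : ℕ) (ρ : ℝ) : ((t ^ k : ℝ)) ^ ρ = (t ^ ρ) ^ k := by
  rw [← Real.rpow_natCast t k, ← Real.rpow_natCast (t ^ ρ) k, ← Real.rpow_mul ht,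
    ← Real.rpow_mul ht, mul_comm]

lemma hL_lim {α θ : ℝ} (hα : 0 < α) (hθ : 0 ≤ θ) (hθα : θ < α) :
    Tendsto (fun t : ℝ => (t ^ θ - 1) / (1 - t ^ (θ - α))) (𝓝[>] (1:ℝ)) (𝓝 (θ / (α - θ))) := by
  have hne : θ - α ≠ 0 := by linarith
  have h := (ratio_lim (ρ := θ) hne).neg
  have heq : (fun t : ℝ => -((t ^ θ - 1) / (t ^ (θ - α) - 1)))
      = fun t : ℝ => (t ^ θ - 1) / (1 - t ^ (θ - α)) := by
    funext t
    rw [← div_neg, neg_sub]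
  rw [heq] at h
  convert h using 2
  rw [show α - θ = -(θ - α) by ring, div_neg]

/-- the finite sum of ratio limits, lower version -/
lemma sum_ratio_tendsto (μ : Measure ℝ) [IsProbabilityMeasure μ] {α θ : ℝ}
    (hH : RegVary (Htr μ α) θ) {t : ℝ} (ht : 1 < t) (w : ℕ → ℝ) (N : ℕ) :
    Tendsto (fun x => ∑ k ∈ Finset.range N,
        w k * (Htr μ α (t ^ (k+1) * x) / Htr μ α x - Htr μ α (t ^ k * x) / Htr μ α x)) atTop
      (𝓝 (∑ k ∈ Finset.range N, w k * (((t:ℝ) ^ (k+1)) ^ θ - ((t:ℝ) ^ k) ^ θ))) := by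
  have ht0 : (0:ℝ) < t := lt_trans one_pos ht
  refine tendsto_finset_sum _ fun k _ => ?_
  have h1 := hH (t ^ (k+1)) (pow_pos ht0 _)
  have h2 := hH (t ^ k) (pow_pos ht0 _)
  exact (h1.sub h2).const_mul _

lemma lemA (μ : Measure ℝ) [IsProbabilityMeasure μ] (hsupp : μ (Iic 0) = 0)
    {α θ : ℝ} (hα : 0 < α) (hθ : 0 ≤ θ) (hθα : θ < α)
    (hH : RegVary (Htr μ α) θ) :
    Tendsto (fun x => Tf μ α x / Htr μ α x) atTop (𝓝 (θ / (α - θ))) := by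
  have hL := hL_lim hα hθ hθα
  rw [tendsto_order]
  constructor
  · -- lower bound
    intro l hl
    have hL' : Tendsto (fun t : ℝ => (t ^ α)⁻¹ * ((t ^ θ - 1) / (1 - t ^ (θ - α))))
        (𝓝[>] (1:ℝ)) (𝓝 (θ / (α - θ))) := by
      have hc : Tendsto (fun t : ℝ => (t ^ α)⁻¹) (𝓝[>] (1:ℝ)) (𝓝 1) := by
        have hct : Tendsto (fun t : ℝ => t ^ α) (𝓝[>] (1:ℝ)) (𝓝 ((1:ℝ) ^ α)) :=
          ((Real.continuousAt_rpow_const 1 α (Or.inl one_ne_zero)).tendsto).mono_left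
            nhdsWithin_le_nhds
        rw [Real.one_rpow] at hct
        simpa using hct.inv₀ one_ne_zero
      have := hc.mul hL
      simpa using this
    obtain ⟨t, htl, ht1⟩ :=
      ((hL'.eventually (eventually_gt_nhds hl)).and self_mem_nhdsWithin).exists
    have ht0 : (0:ℝ) < t := lt_trans one_pos ht1
    have ha1 : 1 < t ^ α := one_lt_rpow' ht1 hα
    have ha0 : (0:ℝ) < t ^ α := lt_trans one_pos ha1
    have hc1 : (1:ℝ) ≤ t ^ θ := by
      rw [← Real.one_rpow θ]
      exact Real.rpow_le_rpow zero_le_one ht1.le hθ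
    have hr0 : (0:ℝ) < t ^ (θ - α) := Real.rpow_pos_of_pos ht0 _
    have hr1 : t ^ (θ - α) < 1 := Real.rpow_lt_one_of_one_lt_of_neg ht1 (by linarith)
    -- partial sums converge to the full value
    have hPN : Tendsto (fun N : ℕ => ∑ k ∈ Finset.range N,
        ((t ^ α)⁻¹) ^ (k+1) * (((t:ℝ) ^ (k+1)) ^ θ - ((t:ℝ) ^ k) ^ θ)) atTop
        (𝓝 ((t ^ α)⁻¹ * ((t ^ θ - 1) / (1 - t ^ (θ - α))))) := by
      have hterm : ∀ k : ℕ, ((t ^ α)⁻¹) ^ (k+1) * (((t:ℝ) ^ (k+1)) ^ θ - ((t:ℝ) ^ k) ^ θ)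
          = ((t ^ α)⁻¹ * (t ^ θ - 1)) * (t ^ (θ - α)) ^ k := by
        intro k
        rw [pow_rpow ht0.le, pow_rpow ht0.le, Real.rpow_sub ht0]
        have h1 : (t ^ θ / t ^ α) ^ k = (t ^ θ) ^ k / (t ^ α) ^ k := div_pow _ _ _
        rw [h1]
        rw [div_eq_mul_inv, ← inv_pow]
        ring
      have hgeo := (hasSum_geometric_of_lt_one hr0.le hr1).tendsto_sum_nat
      have := hgeo.const_mul ((t ^ α)⁻¹ * (t ^ θ - 1))
      refine Tendsto.congr' ?_ (by convert this using 2; rw [div_eq_mul_inv, mul_assoc] : Tendsto _ atTop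
        (𝓝 ((t ^ α)⁻¹ * ((t ^ θ - 1) / (1 - t ^ (θ - α))))))
      filter_upwards with N
      rw [Finset.mul_sum]
      exact (Finset.sum_congr rfl fun k _ => (hterm k)).symm
    obtain ⟨N, hN⟩ := (hPN.eventually (eventually_gt_nhds htl)).exists
    -- now the x-limit
    have hx := sum_ratio_tendsto μ hH ht1 (fun k => ((t ^ α)⁻¹) ^ (k+1)) N
    filter_upwards [uf_event μ hsupp α hα, hx.eventually (eventually_gt_nhds hN)] with x hx3 hgt
    obtain ⟨hx0, hHpos, -⟩ := hx3
    refine lt_of_lt_of_le hgt ?_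
    have hiter := iter_down μ hsupp α hα ht1 N x hx0
    have heq : ∑ k ∈ Finset.range N, ((t ^ α)⁻¹) ^ (k+1) *
        (Htr μ α (t ^ (k+1) * x) / Htr μ α x - Htr μ α (t ^ k * x) / Htr μ α x)
        = (∑ k ∈ Finset.range N, ((t ^ α)⁻¹) ^ (k+1) *
            (Htr μ α (t ^ (k+1) * x) - Htr μ α (t ^ k * x))) / Htr μ α x := by
      rw [Finset.sum_div]
      exact Finset.sum_congr rfl fun k _ => by ring
    rw [heq]
    exact (div_le_div_iff_of_pos_right hHpos).mpr hiter
  · -- upper bound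
    intro u hu
    have hε : 0 < (u - θ / (α - θ)) / 3 := by
      have : 0 < u - θ / (α - θ) := by linarith
      linarith
    set ε := (u - θ / (α - θ)) / 3 with hεdef
    obtain ⟨t, htL, ht1⟩ :=
      ((hL.eventually (eventually_lt_nhds (show θ / (α - θ) < θ / (α - θ) + ε by linarith))).and
        self_mem_nhdsWithin).exists
    have ht0 : (0:ℝ) < t := lt_trans one_pos ht1
    have ha0 : (0:ℝ) < t ^ α := Real.rpow_pos_of_pos ht0 α
    have hc1 : (1:ℝ) ≤ t ^ θ := by
      rw [← Real.one_rpow θ]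
      exact Real.rpow_le_rpow zero_le_one ht1.le hθ
    set γ := (θ + α) / 2 with hγdef
    have hθγ : θ < γ := by rw [hγdef]; linarith
    have hγα : γ < α := by rw [hγdef]; linarith
    have hγ0 : 0 < γ := by linarith
    have hg0 : (0:ℝ) < t ^ γ := Real.rpow_pos_of_pos ht0 γ
    have hq0 : (0:ℝ) < t ^ (γ - α) := Real.rpow_pos_of_pos ht0 _
    have hq1 : t ^ (γ - α) < 1 := Real.rpow_lt_one_of_one_lt_of_neg ht1 (by linarith)
    have hr0 : (0:ℝ) < t ^ (θ - α) := Real.rpow_pos_of_pos ht0 _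
    have hr1 : t ^ (θ - α) < 1 := Real.rpow_lt_one_of_one_lt_of_neg ht1 (by linarith)
    have hqeq : t ^ (γ - α) = t ^ γ * (t ^ α)⁻¹ := by
      rw [Real.rpow_sub ht0, div_eq_mul_inv]
    have hreq : t ^ (θ - α) = t ^ θ * (t ^ α)⁻¹ := by
      rw [Real.rpow_sub ht0, div_eq_mul_inv]
    have htθγ : t ^ θ < t ^ γ := (Real.rpow_lt_rpow_left_iff ht1).mpr hθγ
    have hdb := (hH t ht0).eventually (eventually_lt_nhds htθγ)
    obtain ⟨x0, hx0⟩ := eventually_atTop.mp (hdb.and (uf_event μ hsupp α hα))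
    have hdouble : ∀ x, x0 ≤ x → ∀ k : ℕ, Htr μ α (t ^ k * x) ≤ (t ^ γ) ^ k * Htr μ α x := by
      intro x hx k
      induction k with
      | zero => simp
      | succ k ih =>
        obtain ⟨-, hxpos, -, -⟩ := hx0 x hx
        have hxk : x0 ≤ t ^ k * x :=
          le_trans hx (le_mul_of_one_le_left hxpos.le (one_le_pow₀ ht1.le))
        obtain ⟨hrk, -, hHk, -⟩ := hx0 (t ^ k * x) hxk
        have h1 : Htr μ α (t * (t ^ k * x)) < t ^ γ * Htr μ α (t ^ k * x) :=
          (div_lt_iff₀ hHk).mp hrk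
        have h2 : t * (t ^ k * x) = t ^ (k+1) * x := by ring
        rw [h2] at h1
        calc Htr μ α (t ^ (k+1) * x) ≤ t ^ γ * Htr μ α (t ^ k * x) := h1.le
          _ ≤ t ^ γ * ((t ^ γ) ^ k * Htr μ α x) := by
              exact mul_le_mul_of_nonneg_left ih hg0.le
          _ = (t ^ γ) ^ (k+1) * Htr μ α x := by ring
    have htail0 : Tendsto (fun N : ℕ => t ^ γ * (t ^ (γ - α)) ^ N / (1 - t ^ (γ - α))) atTop
        (𝓝 0) := by
      have h1 := tendsto_pow_atTop_nhds_zero_of_lt_one hq0.le hq1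
      have h2 := (h1.const_mul (t ^ γ)).div_const (1 - t ^ (γ - α))
      simpa using h2
    obtain ⟨N0, hN0⟩ := (htail0.eventually (eventually_lt_nhds hε)).exists
    set Ct := t ^ γ * (t ^ (γ - α)) ^ N0 / (1 - t ^ (γ - α)) with hCt
    have hCt0 : 0 ≤ Ct := by
      rw [hCt]
      have : (0:ℝ) < 1 - t ^ (γ - α) := by linarith
      positivity
    have hkey : ∀ x, x0 ≤ x → Tf μ α x ≤
        (∑ k ∈ Finset.range N0, ((t ^ α)⁻¹) ^ k * (Htr μ α (t ^ (k+1) * x) - Htr μ α (t ^ k * x)))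
          + ε * Htr μ α x := by
      intro x hx
      obtain ⟨-, hxpos, hHp, -⟩ := hx0 x hx
      have hbnd : ∀ N, N0 ≤ N → Tf μ α x ≤
          ((∑ k ∈ Finset.range N0, ((t ^ α)⁻¹) ^ k * (Htr μ α (t ^ (k+1) * x) - Htr μ α (t ^ k * x)))
            + Ct * Htr μ α x) + x ^ α * (μ (Ioi (t ^ N * x))).toReal := by
        intro N hNN
        have hiter := iter_up μ hsupp α hα ht1 N x hxpos
        have hsplit : (∑ k ∈ Finset.range N, ((t ^ α)⁻¹) ^ k * (Htr μ α (t ^ (k+1) * x) - Htr μ α (t ^ k * x)))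
            = (∑ k ∈ Finset.range N0, ((t ^ α)⁻¹) ^ k * (Htr μ α (t ^ (k+1) * x) - Htr μ α (t ^ k * x)))
              + ∑ k ∈ Finset.Ico N0 N, ((t ^ α)⁻¹) ^ k * (Htr μ α (t ^ (k+1) * x) - Htr μ α (t ^ k * x)) := by
          rw [Finset.range_eq_Ico, Finset.range_eq_Ico, Finset.sum_Ico_consecutive _ (Nat.zero_le N0) hNN]
        have hIco : (∑ k ∈ Finset.Ico N0 N, ((t ^ α)⁻¹) ^ k * (Htr μ α (t ^ (k+1) * x) - Htr μ α (t ^ k * x)))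
            ≤ Ct * Htr μ α x := by
          calc (∑ k ∈ Finset.Ico N0 N, ((t ^ α)⁻¹) ^ k * (Htr μ α (t ^ (k+1) * x) - Htr μ α (t ^ k * x)))
              ≤ ∑ k ∈ Finset.Ico N0 N, (t ^ γ * Htr μ α x) * (t ^ (γ - α)) ^ k := by
                refine Finset.sum_le_sum fun k _ => ?_
                have hd : Htr μ α (t ^ (k+1) * x) - Htr μ α (t ^ k * x) ≤ (t ^ γ) ^ (k+1) * Htr μ α x := by
                  have hnn := htr_nonneg μ hsupp α (t ^ k * x)
                  have := hdouble x hx (k+1)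
                  linarith
                have hw : (0:ℝ) ≤ ((t ^ α)⁻¹) ^ k := by positivity
                calc ((t ^ α)⁻¹) ^ k * (Htr μ α (t ^ (k+1) * x) - Htr μ α (t ^ k * x))
                    ≤ ((t ^ α)⁻¹) ^ k * ((t ^ γ) ^ (k+1) * Htr μ α x) :=
                      mul_le_mul_of_nonneg_left hd hw
                  _ = (t ^ γ * Htr μ α x) * (t ^ γ * (t ^ α)⁻¹) ^ k := by
                      rw [mul_pow]; ring
                  _ = (t ^ γ * Htr μ α x) * (t ^ (γ - α)) ^ k := by rw [hqeq]
            _ = (t ^ γ * Htr μ α x) * ∑ k ∈ Finset.Ico N0 N, (t ^ (γ - α)) ^ k := by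
                rw [Finset.mul_sum]
            _ ≤ (t ^ γ * Htr μ α x) * ((t ^ (γ - α)) ^ N0 / (1 - t ^ (γ - α))) := by
                refine mul_le_mul_of_nonneg_left (geom_sum_Ico_le_of_lt_one hq0.le hq1) ?_
                exact mul_nonneg hg0.le hHp.le
            _ = Ct * Htr μ α x := by rw [hCt]; ring
        linarith
      have hlim : Tendsto (fun N : ℕ =>
          ((∑ k ∈ Finset.range N0, ((t ^ α)⁻¹) ^ k * (Htr μ α (t ^ (k+1) * x) - Htr μ α (t ^ k * x)))
            + Ct * Htr μ α x) + x ^ α * (μ (Ioi (t ^ N * x))).toReal) atTop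
          (𝓝 (((∑ k ∈ Finset.range N0, ((t ^ α)⁻¹) ^ k * (Htr μ α (t ^ (k+1) * x) - Htr μ α (t ^ k * x)))
            + Ct * Htr μ α x) + 0)) :=
        tendsto_const_nhds.add (tail_to_zero μ hxpos ht1 α)
      have h3 := ge_of_tendsto hlim (eventually_atTop.mpr ⟨N0, hbnd⟩)
      have h4 : Ct * Htr μ α x ≤ ε * Htr μ α x :=
        mul_le_mul_of_nonneg_right hN0.le hHp.le
      linarith
    -- the finite sum limit bound
    have hP'le : (∑ k ∈ Finset.range N0, ((t ^ α)⁻¹) ^ k * (((t:ℝ) ^ (k+1)) ^ θ - ((t:ℝ) ^ k) ^ θ))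
        ≤ (t ^ θ - 1) / (1 - t ^ (θ - α)) := by
      have hterm : ∀ k : ℕ, ((t ^ α)⁻¹) ^ k * (((t:ℝ) ^ (k+1)) ^ θ - ((t:ℝ) ^ k) ^ θ)
          = (t ^ θ - 1) * (t ^ (θ - α)) ^ k := by
        intro k
        rw [pow_rpow ht0.le, pow_rpow ht0.le, hreq, mul_pow]
        ring
      calc (∑ k ∈ Finset.range N0, ((t ^ α)⁻¹) ^ k * (((t:ℝ) ^ (k+1)) ^ θ - ((t:ℝ) ^ k) ^ θ))
          = (t ^ θ - 1) * ∑ k ∈ Finset.range N0, (t ^ (θ - α)) ^ k := by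
            rw [Finset.mul_sum]
            exact Finset.sum_congr rfl fun k _ => hterm k
        _ ≤ (t ^ θ - 1) * ((t ^ (θ - α)) ^ 0 / (1 - t ^ (θ - α))) := by
            refine mul_le_mul_of_nonneg_left ?_ (by linarith)
            rw [Finset.range_eq_Ico]
            exact geom_sum_Ico_le_of_lt_one hr0.le hr1
        _ = (t ^ θ - 1) / (1 - t ^ (θ - α)) := by rw [pow_zero]; ring
    have hxlim := sum_ratio_tendsto μ hH ht1 (fun k => ((t ^ α)⁻¹) ^ k) N0
    have hPε : (∑ k ∈ Finset.range N0, ((t ^ α)⁻¹) ^ k * (((t:ℝ) ^ (k+1)) ^ θ - ((t:ℝ) ^ k) ^ θ))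
        < (∑ k ∈ Finset.range N0, ((t ^ α)⁻¹) ^ k * (((t:ℝ) ^ (k+1)) ^ θ - ((t:ℝ) ^ k) ^ θ)) + ε := by
      linarith
    filter_upwards [eventually_ge_atTop x0, hxlim.eventually (eventually_lt_nhds hPε)] with x hxge hsum
    obtain ⟨-, hxpos, hHp, -⟩ := hx0 x hxge
    have hk := hkey x hxge
    have heq2 : ∑ k ∈ Finset.range N0, ((t ^ α)⁻¹) ^ k *
        (Htr μ α (t ^ (k+1) * x) / Htr μ α x - Htr μ α (t ^ k * x) / Htr μ α x)
        = (∑ k ∈ Finset.range N0, ((t ^ α)⁻¹) ^ k *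
            (Htr μ α (t ^ (k+1) * x) - Htr μ α (t ^ k * x))) / Htr μ α x := by
      rw [Finset.sum_div]
      exact Finset.sum_congr rfl fun k _ => by ring
    have hdiv : Tf μ α x / Htr μ α x ≤
        (∑ k ∈ Finset.range N0, ((t ^ α)⁻¹) ^ k *
          (Htr μ α (t ^ (k+1) * x) - Htr μ α (t ^ k * x))) / Htr μ α x + ε := by
      have h5 := (div_le_div_iff_of_pos_right hHp).mpr hk
      rw [add_div] at h5
      have h6 : ε * Htr μ α x / Htr μ α x = ε := by
        field_simp
      rw [h6] at h5
      exact h5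
    rw [← heq2] at hdiv
    calc Tf μ α x / Htr μ α x ≤ _ + ε := hdiv
      _ < ((∑ k ∈ Finset.range N0, ((t ^ α)⁻¹) ^ k * (((t:ℝ) ^ (k+1)) ^ θ - ((t:ℝ) ^ k) ^ θ)) + ε) + ε := by
          linarith
      _ ≤ ((t ^ θ - 1) / (1 - t ^ (θ - α)) + ε) + ε := by linarith
      _ < ((θ / (α - θ) + ε) + ε) + ε := by linarith
      _ = u := by rw [hεdef]; ring

lemma UoverH (μ : Measure ℝ) [IsProbabilityMeasure μ] (hsupp : μ (Iic 0) = 0)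
    {α θ : ℝ} (hα : 0 < α) (hθ : 0 ≤ θ) (hθα : θ < α) (hH : RegVary (Htr μ α) θ) :
    Tendsto (fun x => Uf μ α x / Htr μ α x) atTop (𝓝 (α / (α - θ))) := by
  have hA := lemA μ hsupp hα hθ hθα hH
  have h1 : Tendsto (fun x => 1 + Tf μ α x / Htr μ α x) atTop (𝓝 (1 + θ / (α - θ))) :=
    tendsto_const_nhds.add hA
  have h0 : α - θ ≠ 0 := by linarith
  have hval : 1 + θ / (α - θ) = α / (α - θ) := by
    rw [eq_div_iff h0, add_mul, one_mul, div_mul_cancel₀ _ h0]; ring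
  rw [hval] at h1
  refine h1.congr' ?_
  filter_upwards [uf_event μ hsupp α hα] with x ⟨hx0, hHp, hUp⟩
  unfold Uf
  field_simp

lemma regUf (μ : Measure ℝ) [IsProbabilityMeasure μ] (hsupp : μ (Iic 0) = 0)
    {α θ : ℝ} (hα : 0 < α) (hθ : 0 ≤ θ) (hθα : θ < α) (hH : RegVary (Htr μ α) θ) :
    RegVary (Uf μ α) θ := by
  have hUH := UoverH μ hsupp hα hθ hθα hH
  have hαθ : (0:ℝ) < α - θ := by linarith
  have hne : α / (α - θ) ≠ 0 := ne_of_gt (div_pos hα hαθ)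
  intro s hs
  have hscale : Tendsto (fun x : ℝ => s * x) atTop atTop :=
    Tendsto.const_mul_atTop hs tendsto_id
  have h1 : Tendsto (fun x => Uf μ α (s * x) / Htr μ α (s * x)) atTop (𝓝 (α / (α - θ))) :=
    hUH.comp hscale
  have h2 := hH s hs
  have h3 := hUH.inv₀ hne
  have h4 := (h1.mul h2).mul h3
  have hval : α / (α - θ) * s ^ θ * (α / (α - θ))⁻¹ = s ^ θ := by
    field_simp
  rw [hval] at h4
  refine h4.congr' ?_
  filter_upwards [uf_event μ hsupp α hα, eventually_scale' hs (uf_event μ hsupp α hα)]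
    with x ⟨hx0, hHp, hUp⟩ ⟨hsx0, hHsp, hUsp⟩
  field_simp

lemma HoverU (μ : Measure ℝ) [IsProbabilityMeasure μ] (hsupp : μ (Iic 0) = 0)
    {α θ : ℝ} (hα : 0 < α) (hθ : 0 ≤ θ) (hθα : θ < α) (hU : RegVary (Uf μ α) θ) :
    Tendsto (fun x => Htr μ α x / Uf μ α x) atTop (𝓝 ((α - θ) / α)) := by
  have hB := lemB μ hsupp hα hθ hθα hU
  have h1 : Tendsto (fun x => 1 - Tf μ α x / Uf μ α x) atTop (𝓝 (1 - θ / α)) :=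
    tendsto_const_nhds.sub hB
  have hval : 1 - θ / α = (α - θ) / α := by
    rw [eq_div_iff hα.ne', sub_mul, one_mul, div_mul_cancel₀ _ hα.ne']
  rw [hval] at h1
  refine h1.congr' ?_
  filter_upwards [uf_event μ hsupp α hα] with x ⟨hx0, hHp, hUp⟩
  rw [eq_div_iff hUp.ne', sub_mul, one_mul, div_mul_eq_mul_div, mul_div_assoc,
    div_self hUp.ne', mul_one]
  unfold Uf
  ring

lemma regHfromU (μ : Measure ℝ) [IsProbabilityMeasure μ] (hsupp : μ (Iic 0) = 0)
    {α θ : ℝ} (hα : 0 < α) (hθ : 0 ≤ θ) (hθα : θ < α) (hU : RegVary (Uf μ α) θ) :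
    RegVary (Htr μ α) θ := by
  have hHU := HoverU μ hsupp hα hθ hθα hU
  have hαθ : (0:ℝ) < α - θ := by linarith
  have hne : (α - θ) / α ≠ 0 := ne_of_gt (div_pos hαθ hα)
  intro s hs
  have hscale : Tendsto (fun x : ℝ => s * x) atTop atTop :=
    Tendsto.const_mul_atTop hs tendsto_id
  have h1 : Tendsto (fun x => Htr μ α (s * x) / Uf μ α (s * x)) atTop (𝓝 ((α - θ) / α)) :=
    hHU.comp hscale
  have h2 := hU s hs
  have h3 := hHU.inv₀ hne
  have h4 := (h1.mul h2).mul h3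
  have hval : (α - θ) / α * s ^ θ * ((α - θ) / α)⁻¹ = s ^ θ := by
    field_simp
  rw [hval] at h4
  refine h4.congr' ?_
  filter_upwards [uf_event μ hsupp α hα, eventually_scale' hs (uf_event μ hsupp α hα)]
    with x ⟨hx0, hHp, hUp⟩ ⟨hsx0, hHsp, hUsp⟩
  field_simp

lemma gw_event (μ : Measure ℝ) [IsProbabilityMeasure μ] (hsupp : μ (Iic 0) = 0)
    {α : ℝ} (hα : 0 < α) : ∀ᶠ x in atTop, 1 - Gw μ α x = Uf μ α x / x ^ α := by
  filter_upwards [eventually_gt_atTop (0:ℝ)] with x hx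
  have h := uf_eq μ hsupp α hα hx
  have hxα : (0:ℝ) < x ^ α := Real.rpow_pos_of_pos hx α
  rw [eq_div_iff hxα.ne']
  unfold Uf
  linarith [mul_comm (x ^ α) (1 - Gw μ α x)]

lemma regGiffU (μ : Measure ℝ) [IsProbabilityMeasure μ] (hsupp : μ (Iic 0) = 0)
    {α θ : ℝ} (hα : 0 < α) (hθ : 0 ≤ θ) (hθα : θ < α) :
    RegVary (Uf μ α) θ ↔ RegVary (fun x => 1 - Gw μ α x) (θ - α) := by
  constructor
  · intro hU s hs
    have hsα : (0:ℝ) < s ^ α := Real.rpow_pos_of_pos hs α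
    have h4 := (hU s hs).mul_const ((s ^ α)⁻¹)
    have hval : s ^ θ * (s ^ α)⁻¹ = s ^ (θ - α) := by
      rw [Real.rpow_sub hs, div_eq_mul_inv]
    rw [hval] at h4
    refine h4.congr' ?_
    filter_upwards [gw_event μ hsupp hα, eventually_scale' hs (gw_event μ hsupp hα),
      uf_event μ hsupp α hα, eventually_gt_atTop (0:ℝ)] with x hg hgs ⟨hx0, hHp, hUp⟩ hxp
    rw [hg, hgs]
    have hmul : (s * x) ^ α = s ^ α * x ^ α := Real.mul_rpow hs.le hxp.le
    have hxα : (0:ℝ) < x ^ α := Real.rpow_pos_of_pos hxp α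
    rw [hmul]
    field_simp
  · intro hG s hs
    have hsα : (0:ℝ) < s ^ α := Real.rpow_pos_of_pos hs α
    have h4 := (hG s hs).mul_const (s ^ α)
    have hval : s ^ (θ - α) * s ^ α = s ^ θ := by
      rw [← Real.rpow_add hs]
      ring_nf
    rw [hval] at h4
    refine h4.congr' ?_
    filter_upwards [gw_event μ hsupp hα, eventually_scale' hs (gw_event μ hsupp hα),
      uf_event μ hsupp α hα, eventually_gt_atTop (0:ℝ)] with x hg hgs ⟨hx0, hHp, hUp⟩ hxp
    rw [hg, hgs]
    have hmul : (s * x) ^ α = s ^ α * x ^ α := Real.mul_rpow hs.le hxp.le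
    have hxα : (0:ℝ) < x ^ α := Real.rpow_pos_of_pos hxp α
    rw [hmul]
    field_simp

theorem stmt11 (μ : Measure ℝ) [IsProbabilityMeasure μ] (hsupp : μ (Iic 0) = 0)
    (α θ : ℝ) (hα : 0 < α) (hθ : 0 ≤ θ) (hθα : θ < α) :
    (RegVary (Htr μ α) θ ↔ RegVary (fun x => 1 - Gw μ α x) (θ - α)) ∧
      (RegVary (Htr μ α) θ →
        Tendsto (fun x => x ^ α * (1 - Gw μ α x) / Htr μ α x) atTop
          (𝓝 (α / (α - θ)))) := by
  constructor
  · constructor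
    · intro hH
      exact (regGiffU μ hsupp hα hθ hθα).mp (regUf μ hsupp hα hθ hθα hH)
    · intro hG
      exact regHfromU μ hsupp hα hθ hθα ((regGiffU μ hsupp hα hθ hθα).mpr hG)
  · intro hH
    have hUH := UoverH μ hsupp hα hθ hθα hH
    refine hUH.congr' ?_
    filter_upwards [eventually_gt_atTop (0:ℝ)] with x hx
    rw [uf_eq μ hsupp α hα hx]
    rfl
end

section
/- Let α>0, L slowly varying at infinity, and λ≥0. If x^α(1−F(x))/L(x) → λ as x→∞, then H_α(x)=∫_{[0,x]} y^α dF(y) belongs to the de Haan class Π_{αλ}(L), i.e. (H_α(tx)−H_α(x))/L(x) → αλ·log t for every t>1. -/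
open MeasureTheory Set Filter Topology

lemma stmt12_integrableOn_rpow (μ : Measure ℝ) [IsProbabilityMeasure μ] (hsupp : μ (Iic 0) = 0)
    (α : ℝ) (hα : 0 < α) (b : ℝ) : IntegrableOn (fun y : ℝ => y ^ α) (Iic b) μ := by
  rcases le_or_gt b 0 with hb | hb
  · have h0 : μ (Iic b) = 0 :=
      le_antisymm ((measure_mono (Iic_subset_Iic.mpr hb)).trans hsupp.le) zero_le
    unfold IntegrableOn
    rw [Measure.restrict_eq_zero.mpr h0]
    exact integrable_zero_measure
  · have hmeas : Measurable fun y : ℝ => y ^ α := by fun_prop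
    refine Integrable.mono' (integrable_const (b ^ α)) hmeas.aestronglyMeasurable ?_
    have h1 : ∀ᵐ y ∂μ.restrict (Iic b), y ∈ Iic b := ae_restrict_mem measurableSet_Iic
    have h2 : ∀ᵐ y ∂μ.restrict (Iic b), y ∉ Iic 0 := by
      refine measure_eq_zero_iff_ae_notMem.mp ?_
      rw [Measure.restrict_apply measurableSet_Iic]
      exact le_antisymm ((measure_mono inter_subset_left).trans hsupp.le) zero_le
    filter_upwards [h1, h2] with y hy hy0
    simp only [mem_Iic, not_le] at hy hy0
    rw [Real.norm_eq_abs, abs_of_nonneg (Real.rpow_nonneg hy0.le α)]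
    exact Real.rpow_le_rpow hy0.le hy hα.le

lemma stmt12_Htr_diff (μ : Measure ℝ) [IsProbabilityMeasure μ] (hsupp : μ (Iic 0) = 0)
    (α : ℝ) (hα : 0 < α) {a b : ℝ} (hab : a ≤ b) :
    Htr μ α b - Htr μ α a = ∫ y in Ioc a b, y ^ α ∂μ := by
  have hu : Iic a ∪ Ioc a b = Iic b := Iic_union_Ioc_eq_Iic hab
  have h1 : Htr μ α b = Htr μ α a + ∫ y in Ioc a b, y ^ α ∂μ := by
    unfold Htr
    rw [← hu, setIntegral_union (Iic_disjoint_Ioc le_rfl) measurableSet_Ioc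
      (stmt12_integrableOn_rpow μ hsupp α hα a)
      ((stmt12_integrableOn_rpow μ hsupp α hα b).mono_set Ioc_subset_Iic_self)]
  linarith

lemma stmt12_measure_Ioc_toReal (μ : Measure ℝ) [IsProbabilityMeasure μ] {a b : ℝ} (hab : a ≤ b) :
    (μ (Ioc a b)).toReal = distF μ b - distF μ a := by
  have h : μ (Iic b) = μ (Iic a) + μ (Ioc a b) := by
    rw [← Iic_union_Ioc_eq_Iic hab, measure_union (Iic_disjoint_Ioc le_rfl) measurableSet_Ioc]
  unfold distF
  rw [h, ENNReal.toReal_add (measure_ne_top μ _) (measure_ne_top μ _)]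
  ring

lemma stmt12_piece (μ : Measure ℝ) [IsProbabilityMeasure μ] (hsupp : μ (Iic 0) = 0)
    {α : ℝ} (hα : 0 < α) {a b : ℝ} (ha : 0 < a) (hab : a ≤ b) :
    a ^ α * (μ (Ioc a b)).toReal ≤ Htr μ α b - Htr μ α a ∧
      Htr μ α b - Htr μ α a ≤ b ^ α * (μ (Ioc a b)).toReal := by
  rw [stmt12_Htr_diff μ hsupp α hα hab]
  have hint : IntegrableOn (fun y : ℝ => y ^ α) (Ioc a b) μ :=
    (stmt12_integrableOn_rpow μ hsupp α hα b).mono_set Ioc_subset_Iic_self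
  have hconst : ∀ c : ℝ, IntegrableOn (fun _ : ℝ => c) (Ioc a b) μ :=
    fun c => integrableOn_const (measure_ne_top μ _)
  constructor
  · have := setIntegral_mono_on (hconst (a ^ α)) hint measurableSet_Ioc
      (fun y hy => Real.rpow_le_rpow ha.le hy.1.le hα.le)
    simpa [setIntegral_const, smul_eq_mul, mul_comm, measureReal_def] using this
  · have := setIntegral_mono_on hint (hconst (b ^ α)) measurableSet_Ioc
      (fun y hy => Real.rpow_le_rpow (ha.le.trans hy.1.le) hy.2 hα.le)
    simpa [setIntegral_const, smul_eq_mul, mul_comm, measureReal_def] using this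

lemma stmt12_key_bound (μ : Measure ℝ) [IsProbabilityMeasure μ] (hsupp : μ (Iic 0) = 0)
    {α : ℝ} (hα : 0 < α) (L : ℝ → ℝ) {r : ℝ} (hr : 1 < r) (n : ℕ) {x : ℝ} (hx : 0 < x) :
    |(Htr μ α (r ^ n * x) - Htr μ α x) / L x -
        ∑ k ∈ Finset.range n, (r ^ k * x) ^ α * (distF μ (r ^ (k+1) * x) - distF μ (r ^ k * x)) / L x|
      ≤ (r ^ α - 1) *
        ∑ k ∈ Finset.range n, |(r ^ k * x) ^ α * (distF μ (r ^ (k+1) * x) - distF μ (r ^ k * x)) / L x| := by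
  have hr0 : 0 < r := lt_trans one_pos hr
  have hxk : ∀ k : ℕ, 0 < r ^ k * x := fun k => mul_pos (pow_pos hr0 k) hx
  have hmono : ∀ k : ℕ, r ^ k * x ≤ r ^ (k+1) * x := fun k =>
    mul_le_mul_of_nonneg_right (pow_le_pow_right₀ hr.le (Nat.le_succ k)) hx.le
  set P : ℕ → ℝ := fun k => (r ^ k * x) ^ α * (μ (Ioc (r ^ k * x) (r ^ (k+1) * x))).toReal with hP
  have hPnn : ∀ k, 0 ≤ P k := fun k =>
    mul_nonneg (Real.rpow_nonneg (hxk k).le α) ENNReal.toReal_nonneg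
  have hPeq : ∀ k, P k = (r ^ k * x) ^ α * (distF μ (r ^ (k+1) * x) - distF μ (r ^ k * x)) := by
    intro k; simp only [hP]; rw [stmt12_measure_Ioc_toReal μ (hmono k)]
  have hDb : ∀ k : ℕ, P k ≤ Htr μ α (r ^ (k+1) * x) - Htr μ α (r ^ k * x) ∧
      Htr μ α (r ^ (k+1) * x) - Htr μ α (r ^ k * x) ≤ r ^ α * P k := by
    intro k
    have hp := stmt12_piece μ hsupp hα (hxk k) (hmono k)
    refine ⟨hp.1, hp.2.trans_eq ?_⟩
    have h1 : r ^ (k+1) * x = r * (r ^ k * x) := by ring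
    rw [hP, h1, Real.mul_rpow hr0.le (hxk k).le]; ring
  have htel : Htr μ α (r ^ n * x) - Htr μ α x =
      ∑ k ∈ Finset.range n, (Htr μ α (r ^ (k+1) * x) - Htr μ α (r ^ k * x)) := by
    rw [Finset.sum_range_sub (fun k => Htr μ α (r ^ k * x))]
    simp
  have hterm : ∀ k : ℕ,
      |(Htr μ α (r ^ (k+1) * x) - Htr μ α (r ^ k * x)) / L x - P k / L x|
        ≤ (r ^ α - 1) * |P k / L x| := by
    intro k
    set D := Htr μ α (r ^ (k+1) * x) - Htr μ α (r ^ k * x)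
    have h1 : |D - P k| ≤ (r ^ α - 1) * P k := by
      rw [abs_of_nonneg (sub_nonneg.mpr (hDb k).1)]
      have := (hDb k).2; nlinarith [hPnn k]
    rw [div_sub_div_same, abs_div, abs_div, abs_of_nonneg (hPnn k)]
    rcases eq_or_lt_of_le (abs_nonneg (L x)) with hL0 | hL0
    · rw [← hL0]; simp
    · rw [div_le_iff₀ hL0] at *
      calc |D - P k| ≤ (r ^ α - 1) * P k := h1
        _ = (r ^ α - 1) * (P k / |L x|) * |L x| := by field_simp
  calc |(Htr μ α (r ^ n * x) - Htr μ α x) / L x -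
        ∑ k ∈ Finset.range n, (r ^ k * x) ^ α * (distF μ (r ^ (k+1) * x) - distF μ (r ^ k * x)) / L x|
      = |∑ k ∈ Finset.range n,
          ((Htr μ α (r ^ (k+1) * x) - Htr μ α (r ^ k * x)) / L x - P k / L x)| := by
        rw [htel, Finset.sum_div, ← Finset.sum_sub_distrib]
        congr 1
        refine Finset.sum_congr rfl fun k _ => ?_
        rw [hPeq k]
    _ ≤ ∑ k ∈ Finset.range n,
          |(Htr μ α (r ^ (k+1) * x) - Htr μ α (r ^ k * x)) / L x - P k / L x| :=
        Finset.abs_sum_le_sum_abs _ _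
    _ ≤ ∑ k ∈ Finset.range n, (r ^ α - 1) * |P k / L x| :=
        Finset.sum_le_sum fun k _ => hterm k
    _ = (r ^ α - 1) *
        ∑ k ∈ Finset.range n, |(r ^ k * x) ^ α * (distF μ (r ^ (k+1) * x) - distF μ (r ^ k * x)) / L x| := by
        rw [Finset.mul_sum]
        refine Finset.sum_congr rfl fun k _ => ?_
        rw [← hPeq k]

lemma stmt12_hLnz (L : ℝ → ℝ) (hL : RegVary L 0) : ∀ᶠ x in atTop, L x ≠ 0 := by
  have h1 := hL 1 one_pos
  simp only [one_mul, Real.one_rpow] at h1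
  have h2 : ∀ᶠ x in atTop, L x / L x ≠ 0 := h1.eventually_ne one_ne_zero
  filter_upwards [h2] with x hx
  intro h0
  apply hx
  rw [h0, div_zero]

lemma stmt12_hA (μ : Measure ℝ) [IsProbabilityMeasure μ] (α : ℝ) (L : ℝ → ℝ) (hL : RegVary L 0)
    (l : ℝ) (h : Tendsto (fun x => x ^ α * (1 - distF μ x) / L x) atTop (𝓝 l))
    (s : ℝ) (hs : 0 < s) :
    Tendsto (fun x => (s * x) ^ α * (1 - distF μ (s * x)) / L x) atTop (𝓝 l) := by
  have hcomp : Tendsto (fun x : ℝ => s * x) atTop atTop :=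
    Filter.tendsto_id.const_mul_atTop hs
  have h1 : Tendsto (fun x => (s * x) ^ α * (1 - distF μ (s * x)) / L (s * x)) atTop (𝓝 l) :=
    h.comp hcomp
  have h2 : Tendsto (fun x => L (s * x) / L x) atTop (𝓝 1) := by
    have := hL s hs
    rwa [Real.rpow_zero] at this
  have h3 := h1.mul h2
  rw [mul_one] at h3
  have h4 : ∀ᶠ x in atTop, L (s * x) ≠ 0 := hcomp.eventually (stmt12_hLnz L hL)
  refine h3.congr' ?_
  filter_upwards [h4] with x hx
  field_simp

lemma stmt12_hT (μ : Measure ℝ) [IsProbabilityMeasure μ] {α : ℝ} (hα : 0 < α) (L : ℝ → ℝ)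
    (hL : RegVary L 0) (l : ℝ)
    (h : Tendsto (fun x => x ^ α * (1 - distF μ x) / L x) atTop (𝓝 l))
    {r : ℝ} (hr : 1 < r) (k : ℕ) :
    Tendsto (fun x => (r ^ k * x) ^ α * (distF μ (r ^ (k+1) * x) - distF μ (r ^ k * x)) / L x)
      atTop (𝓝 (l * (1 - r ^ (-α)))) := by
  have hr0 : 0 < r := lt_trans one_pos hr
  have h1 := stmt12_hA μ α L hL l h (r ^ k) (pow_pos hr0 k)
  have h2 := (stmt12_hA μ α L hL l h (r ^ (k+1)) (pow_pos hr0 (k+1))).const_mul (r ^ (-α))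
  have h3 := h1.sub h2
  have heq : l - r ^ (-α) * l = l * (1 - r ^ (-α)) := by ring
  rw [heq] at h3
  refine h3.congr' ?_
  filter_upwards [eventually_gt_atTop (0:ℝ)] with x hx
  have hxk : ∀ m : ℕ, (0:ℝ) < r ^ m * x := fun m => mul_pos (pow_pos hr0 m) hx
  have hkey : r ^ (-α) * (r ^ (k+1) * x) ^ α = (r ^ k * x) ^ α := by
    have h5 : r ^ (k+1) * x = r * (r ^ k * x) := by ring
    rw [h5, Real.mul_rpow hr0.le (hxk k).le, ← mul_assoc, ← Real.rpow_add hr0]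
    norm_num
  have hnum : (r ^ k * x) ^ α * (1 - distF μ (r ^ k * x)) -
      r ^ (-α) * ((r ^ (k+1) * x) ^ α * (1 - distF μ (r ^ (k+1) * x))) =
      (r ^ k * x) ^ α * (distF μ (r ^ (k+1) * x) - distF μ (r ^ k * x)) := by
    rw [← mul_assoc, hkey]; ring
  rw [← mul_div_assoc, div_sub_div_same, hnum]

lemma stmt12_nat_limit (a : ℝ) :
    Tendsto (fun n : ℕ => (n : ℝ) * (1 - Real.exp (-a * (1 / n)))) atTop (𝓝 a) := by
  have hd : HasDerivAt (fun s : ℝ => 1 - Real.exp (-a * s)) a 0 := by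
    have h1 : HasDerivAt (fun s : ℝ => -a * s) (-a) 0 := by
      simpa using (hasDerivAt_id (0:ℝ)).const_mul (-a)
    have h2 := (Real.hasDerivAt_exp (-a * 0)).comp 0 h1
    have h3 := h2.const_sub 1
    simpa using h3
  have hslope := hasDerivAt_iff_tendsto_slope.mp hd
  have hcomp : Tendsto (fun n : ℕ => 1 / (n : ℝ)) atTop (𝓝[≠] 0) := by
    refine tendsto_nhdsWithin_of_tendsto_nhds_of_eventually_within _
      tendsto_one_div_atTop_nhds_zero_nat ?_
    filter_upwards [eventually_ge_atTop 1] with n hn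
    simp only [Set.mem_compl_iff, Set.mem_singleton_iff]
    positivity
  have := hslope.comp hcomp
  refine this.congr fun n => ?_
  rcases eq_or_ne (n : ℝ) 0 with h0 | h0
  · simp [slope_def_field, h0]
  · rw [Function.comp_apply, slope_def_field]
    field_simp
    ring_nf
    rw [Real.exp_zero]; ring

set_option maxHeartbeats 1000000 in
theorem stmt12 (μ : Measure ℝ) [IsProbabilityMeasure μ] (hsupp : μ (Iic 0) = 0)
    (α : ℝ) (hα : 0 < α) (L : ℝ → ℝ) (hL : RegVary L 0)
    (l : ℝ) (hl : 0 ≤ l)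
    (h : Tendsto (fun x => x ^ α * (1 - distF μ x) / L x) atTop (𝓝 l)) :
    ∀ t : ℝ, 1 < t →
      Tendsto (fun x => (Htr μ α (t * x) - Htr μ α x) / L x) atTop
        (𝓝 (α * l * Real.log t)) := by
  intro t ht
  have ht0 : 0 < t := lt_trans one_pos ht
  set a : ℝ := α * Real.log t with ha
  rw [Metric.tendsto_nhds]
  intro ε hε
  -- limits in n
  have hc : Tendsto (fun n : ℕ => l * ((n:ℝ) * (1 - Real.exp (-a * (1/n))))) atTop (𝓝 (l * a)) :=
    (stmt12_nat_limit a).const_mul l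
  have hB : Tendsto (fun n : ℕ => Real.exp (a * (1/(n:ℝ))) - 1) atTop (𝓝 0) := by
    have h1 : Tendsto (fun n : ℕ => a * (1/(n:ℝ))) atTop (𝓝 0) := by
      simpa using tendsto_one_div_atTop_nhds_zero_nat.const_mul a
    have h2 := (Real.continuous_exp.tendsto 0).comp h1
    simp only [Real.exp_zero] at h2
    simpa using h2.sub_const 1
  have hBc : Tendsto (fun n : ℕ => (Real.exp (a*(1/(n:ℝ))) - 1) *
      (l * ((n:ℝ) * (1 - Real.exp (-a * (1/n)))))) atTop (𝓝 0) := by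
    simpa using hB.mul hc
  have hev : ∀ᶠ n : ℕ in atTop, 1 ≤ n ∧
      |l * ((n:ℝ) * (1 - Real.exp (-a * (1/n)))) - l * a| < ε/4 ∧
      (Real.exp (a*(1/(n:ℝ))) - 1) * (l * ((n:ℝ) * (1 - Real.exp (-a * (1/n))))) < ε/4 := by
    have e1 : ∀ᶠ n : ℕ in atTop,
        |l * ((n:ℝ) * (1 - Real.exp (-a * (1/n)))) - l * a| < ε/4 := by
      have := Metric.tendsto_nhds.mp hc (ε/4) (by positivity)
      simpa [Real.dist_eq] using this
    have e2 := hBc.eventually (gt_mem_nhds (by positivity : (0:ℝ) < ε/4))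
    exact (eventually_ge_atTop 1).and (e1.and e2)
  obtain ⟨n, hn1, hc1, hc2⟩ := hev.exists
  have hn0 : (0:ℝ) < (n:ℝ) := by exact_mod_cast hn1
  set r : ℝ := t ^ ((1:ℝ)/(n:ℝ)) with hrdef
  have hr : 1 < r := by
    rw [hrdef]
    exact (Real.one_lt_rpow_iff_of_pos ht0).mpr (Or.inl ⟨ht, by positivity⟩)
  have hr0 : 0 < r := lt_trans one_pos hr
  have hrn : r ^ n = t := by
    rw [hrdef, ← Real.rpow_natCast (t ^ ((1:ℝ)/(n:ℝ))) n, ← Real.rpow_mul ht0.le]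
    rw [one_div_mul_cancel hn0.ne', Real.rpow_one]
  have hrm : r ^ (-α) = Real.exp (-a * (1/(n:ℝ))) := by
    rw [hrdef, ← Real.rpow_mul ht0.le, Real.rpow_def_of_pos ht0]
    congr 1
    rw [ha]; ring
  have hrp : r ^ α = Real.exp (a * (1/(n:ℝ))) := by
    rw [hrdef, ← Real.rpow_mul ht0.le, Real.rpow_def_of_pos ht0]
    congr 1
    rw [ha]; ring
  set τ : ℝ := l * (1 - r ^ (-α)) with hτ
  have hτnn : 0 ≤ τ := by
    have : r ^ (-α) ≤ 1 :=
      Real.rpow_le_one_of_one_le_of_nonpos hr.le (neg_nonpos.mpr hα.le)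
    rw [hτ]; nlinarith
  have hceq : (n:ℝ) * τ = l * ((n:ℝ) * (1 - Real.exp (-a * (1/(n:ℝ))))) := by
    rw [hτ, hrm]; ring
  set B : ℝ := r ^ α - 1 with hBdef
  have hB0 : 0 < B := by
    have : 1 < r ^ α := (Real.one_lt_rpow_iff_of_pos hr0).mpr (Or.inl ⟨hr, hα⟩)
    rw [hBdef]; linarith
  have hBeq : B = Real.exp (a*(1/(n:ℝ))) - 1 := by rw [hBdef, hrp]
  set δ : ℝ := ε / (4 * (1 + B)) with hδdef
  have hδ : 0 < δ := by rw [hδdef]; positivity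
  have hδeq : (1 + B) * δ = ε/4 := by
    rw [hδdef]; field_simp
  -- tendsto of the sums
  have hSum : Tendsto (fun x => ∑ k ∈ Finset.range n,
      (r ^ k * x) ^ α * (distF μ (r ^ (k+1) * x) - distF μ (r ^ k * x)) / L x)
      atTop (𝓝 ((n:ℝ) * τ)) := by
    have := tendsto_finset_sum (Finset.range n)
      (fun k _ => stmt12_hT μ hα L hL l h hr k)
    simpa [Finset.sum_const, Finset.card_range, nsmul_eq_mul, hτ] using this
  have hSumAbs : Tendsto (fun x => ∑ k ∈ Finset.range n,
      |(r ^ k * x) ^ α * (distF μ (r ^ (k+1) * x) - distF μ (r ^ k * x)) / L x|)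
      atTop (𝓝 ((n:ℝ) * τ)) := by
    have := tendsto_finset_sum (Finset.range n)
      (fun k (_ : k ∈ Finset.range n) => (stmt12_hT μ hα L hL l h hr k).abs)
    rw [abs_of_nonneg hτnn] at this
    simpa [Finset.sum_const, Finset.card_range, nsmul_eq_mul, hτ] using this
  have ev1 : ∀ᶠ x in atTop, |(∑ k ∈ Finset.range n,
      (r ^ k * x) ^ α * (distF μ (r ^ (k+1) * x) - distF μ (r ^ k * x)) / L x) - (n:ℝ) * τ| < δ := by
    have := Metric.tendsto_nhds.mp hSum δ hδ
    simpa [Real.dist_eq] using this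
  have ev2 : ∀ᶠ x in atTop, (∑ k ∈ Finset.range n,
      |(r ^ k * x) ^ α * (distF μ (r ^ (k+1) * x) - distF μ (r ^ k * x)) / L x|) < (n:ℝ) * τ + δ :=
    hSumAbs.eventually (gt_mem_nhds (lt_add_of_pos_right _ hδ))
  filter_upwards [ev1, ev2, eventually_gt_atTop (0:ℝ)] with x hx1 hx2 hx3
  rw [Real.dist_eq]
  have hkb := stmt12_key_bound μ hsupp hα L hr n hx3
  rw [hrn] at hkb
  set S := ∑ k ∈ Finset.range n,
      (r ^ k * x) ^ α * (distF μ (r ^ (k+1) * x) - distF μ (r ^ k * x)) / L x with hS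
  set SA := ∑ k ∈ Finset.range n,
      |(r ^ k * x) ^ α * (distF μ (r ^ (k+1) * x) - distF μ (r ^ k * x)) / L x| with hSA
  have hGa : α * l * Real.log t = l * a := by rw [ha]; ring
  have htri : |(Htr μ α (t * x) - Htr μ α x) / L x - α * l * Real.log t| ≤
      |(Htr μ α (t * x) - Htr μ α x) / L x - S| + |S - (n:ℝ) * τ| + |(n:ℝ) * τ - α * l * Real.log t| := by
    have t1 := abs_sub_le ((Htr μ α (t * x) - Htr μ α x) / L x) S (α * l * Real.log t)
    have t2 := abs_sub_le S ((n:ℝ) * τ) (α * l * Real.log t)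
    linarith
  have hfin1 : |(Htr μ α (t * x) - Htr μ α x) / L x - S| ≤ B * SA := hkb
  have hfin2 : |(n:ℝ) * τ - α * l * Real.log t| < ε/4 := by
    rw [hGa, hceq]; exact hc1
  have hfin3 : B * ((n:ℝ) * τ) < ε/4 := by rw [hBeq, hceq]; exact hc2
  have hfin4 : B * SA ≤ B * ((n:ℝ) * τ) + B * δ := by nlinarith [hx2, hB0]
  nlinarith [htri, hfin1, hfin2, hfin3, hfin4, hx1, hδeq, hB0, hδ]
end

section
/- Let α>0, L slowly varying at infinity, and λ≥0. If H_α(x)=∫_{[0,x]} y^α dF(y) belongs to the de Haan class Π_{αλ}(L), then x^α(1−F(x))/L(x) → λ as x→∞. -/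
open MeasureTheory Set Filter Topology

section
variable (μ : Measure ℝ) [IsProbabilityMeasure μ]

lemma distF_tendsto : Tendsto (distF μ) atTop (𝓝 1) := by
  have h := tendsto_measure_Iic_atTop (μ := μ)
  rw [measure_univ] at h
  have := (ENNReal.tendsto_toReal (ENNReal.one_ne_top)).comp h
  exact this

variable {α : ℝ} (hα : 0 < α) (hsupp : μ (Iic 0) = 0)

include hα hsupp in
lemma rpow_integrableOn (x : ℝ) : IntegrableOn (fun y => y ^ α) (Iic x) μ := by
  have h1 : IntegrableOn (fun y => y ^ α) (Iic 0) μ := by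
    unfold IntegrableOn
    rw [Measure.restrict_eq_zero.mpr hsupp]
    exact integrable_zero_measure
  have h2 : IntegrableOn (fun y => y ^ α) (Ioc 0 x) μ := by
    apply Measure.integrableOn_of_bounded (M := (max x 1) ^ α) (measure_ne_top μ _)
    · exact (Real.continuous_rpow_const hα.le).measurable.aestronglyMeasurable
    · filter_upwards [ae_restrict_mem measurableSet_Ioc] with y hy
      rw [Real.norm_eq_abs, abs_of_nonneg (Real.rpow_nonneg hy.1.le α)]
      exact Real.rpow_le_rpow hy.1.le (hy.2.trans (le_max_left _ _)) hα.le
  exact (h1.union h2).mono_set (fun y hy => by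
    rcases le_or_gt y 0 with h | h
    · exact Or.inl h
    · exact Or.inr ⟨h, hy⟩)
include hα hsupp in
lemma Htr_diff {a b : ℝ} (hab : a ≤ b) :
    Htr μ α b - Htr μ α a = ∫ y in Ioc a b, y ^ α ∂μ := by
  have hu : Iic a ∪ Ioc a b = Iic b := Iic_union_Ioc_eq_Iic hab
  have hd : Disjoint (Iic a) (Ioc a b) := by
    apply Set.disjoint_left.mpr
    rintro y (hy : y ≤ a) ⟨h1, h2⟩
    exact absurd hy (not_le.mpr h1)
  have := setIntegral_union hd measurableSet_Ioc
    ((rpow_integrableOn μ hα hsupp a))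
    ((rpow_integrableOn μ hα hsupp b).mono_set Ioc_subset_Iic_self)
  rw [Htr, Htr, ← hu, this]
  ring

lemma measure_Ioc_toReal {a b : ℝ} (hab : a ≤ b) :
    (μ (Ioc a b)).toReal = distF μ b - distF μ a := by
  have hu : Iic a ∪ Ioc a b = Iic b := Iic_union_Ioc_eq_Iic hab
  have hd : Disjoint (Iic a) (Ioc a b) := by
    apply Set.disjoint_left.mpr
    rintro y (hy : y ≤ a) ⟨h1, h2⟩
    exact absurd hy (not_le.mpr h1)
  have hm := measure_union (μ := μ) hd measurableSet_Ioc
  rw [hu] at hm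
  have := ENNReal.toReal_add (measure_ne_top μ (Iic a)) (measure_ne_top μ (Ioc a b))
  rw [← hm] at this
  rw [distF, distF, this]
  ring

include hα hsupp in
lemma Htr_diff_bounds {a b : ℝ} (ha : 0 < a) (hab : a ≤ b) :
    a ^ α * (distF μ b - distF μ a) ≤ Htr μ α b - Htr μ α a ∧
    Htr μ α b - Htr μ α a ≤ b ^ α * (distF μ b - distF μ a) := by
  rw [Htr_diff μ hα hsupp hab, ← measure_Ioc_toReal μ hab]
  have hint : IntegrableOn (fun y => y ^ α) (Ioc a b) μ :=
    (rpow_integrableOn μ hα hsupp b).mono_set Ioc_subset_Iic_self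
  constructor
  · have := setIntegral_mono_on (f := fun _ => a ^ α) (g := fun y => y ^ α)
      (integrableOn_const (measure_ne_top μ _)) hint measurableSet_Ioc
      (fun y hy => Real.rpow_le_rpow ha.le hy.1.le hα.le)
    simpa [setIntegral_const, mul_comm, measureReal_def] using this
  · have := setIntegral_mono_on (f := fun y => y ^ α) (g := fun _ => b ^ α)
      hint (integrableOn_const (measure_ne_top μ _)) measurableSet_Ioc
      (fun y hy => Real.rpow_le_rpow (ha.trans_le hy.1.le).le hy.2 hα.le)
    simpa [setIntegral_const, mul_comm, measureReal_def] using this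
end

section iter
variable (μ : Measure ℝ) [IsProbabilityMeasure μ] {α : ℝ}

/-- tail function -/
noncomputable def Utail (μ : Measure ℝ) (α x : ℝ) : ℝ := x ^ α * (1 - distF μ x)

variable (hα : 0 < α) (hsupp : μ (Iic 0) = 0) {t : ℝ} (ht : 1 < t)

lemma Utail_nonneg {x : ℝ} (hx : 0 ≤ x) : 0 ≤ Utail μ α x :=
  mul_nonneg (Real.rpow_nonneg hx α) (by linarith [distF_le_one μ x])

include ht in
lemma pow_mul_rpow {x : ℝ} (hx : 0 ≤ x) (N : ℕ) :
    (t ^ N * x) ^ α = (t ^ α) ^ N * x ^ α := by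
  have ht0 : (0:ℝ) < t := lt_trans one_pos ht
  rw [Real.mul_rpow (pow_nonneg ht0.le N) hx, ← Real.rpow_natCast t N,
    ← Real.rpow_natCast (t ^ α) N, ← Real.rpow_mul ht0.le, ← Real.rpow_mul ht0.le,
    mul_comm (N:ℝ) α]

include ht in
lemma Utail_split {x : ℝ} (hx : 0 < x) :
    Utail μ α x = x ^ α * (distF μ (t * x) - distF μ x) + (t ^ α)⁻¹ * Utail μ α (t * x) := by
  have ht0 : (0:ℝ) < t := lt_trans one_pos ht
  have htα : (0:ℝ) < t ^ α := Real.rpow_pos_of_pos ht0 α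
  have hm : (t * x) ^ α = t ^ α * x ^ α := Real.mul_rpow ht0.le hx.le
  rw [Utail, Utail, hm]
  field_simp
  ring

include hα hsupp ht in
lemma step_upper {x : ℝ} (hx : 0 < x) :
    Utail μ α x ≤ (Htr μ α (t * x) - Htr μ α x) + (t ^ α)⁻¹ * Utail μ α (t * x) := by
  have hxt : x ≤ t * x := le_mul_of_one_le_left hx.le ht.le
  have hb := (Htr_diff_bounds μ hα hsupp hx hxt).1
  rw [Utail_split μ ht hx]
  linarith

include hα hsupp ht in
lemma step_lower {x : ℝ} (hx : 0 < x) :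
    (t ^ α)⁻¹ * (Htr μ α (t * x) - Htr μ α x) + (t ^ α)⁻¹ * Utail μ α (t * x)
      ≤ Utail μ α x := by
  have ht0 : (0:ℝ) < t := lt_trans one_pos ht
  have htα : (0:ℝ) < t ^ α := Real.rpow_pos_of_pos ht0 α
  have hxt : x ≤ t * x := le_mul_of_one_le_left hx.le ht.le
  have hb := (Htr_diff_bounds μ hα hsupp hx hxt).2
  have hm : (t * x) ^ α = t ^ α * x ^ α := Real.mul_rpow ht0.le hx.le
  rw [hm] at hb
  rw [Utail_split μ ht hx]
  have : (t ^ α)⁻¹ * (Htr μ α (t * x) - Htr μ α x) ≤ x ^ α * (distF μ (t * x) - distF μ x) := by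
    rw [inv_mul_le_iff₀ htα]
    linarith
  linarith

include hα hsupp ht in
lemma iter_upper {x : ℝ} (hx : 0 < x) (N : ℕ) :
    Utail μ α x ≤
      (∑ k ∈ Finset.range N, ((t ^ α)⁻¹) ^ k *
        (Htr μ α (t * (t ^ k * x)) - Htr μ α (t ^ k * x)))
      + ((t ^ α)⁻¹) ^ N * Utail μ α (t ^ N * x) := by
  have ht0 : (0:ℝ) < t := lt_trans one_pos ht
  have htα : (0:ℝ) < t ^ α := Real.rpow_pos_of_pos ht0 α
  induction N with
  | zero => simp
  | succ N ih =>
    have hxk : 0 < t ^ N * x := mul_pos (pow_pos ht0 N) hx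
    have hstep := step_upper μ hα hsupp ht hxk
    have hmul := mul_le_mul_of_nonneg_left hstep (le_of_lt (pow_pos (inv_pos.mpr htα) N))
    rw [Finset.sum_range_succ]
    have harr : t * (t ^ N * x) = t ^ (N + 1) * x := by ring
    calc Utail μ α x ≤ _ := ih
    _ ≤ (∑ k ∈ Finset.range N, ((t ^ α)⁻¹) ^ k *
          (Htr μ α (t * (t ^ k * x)) - Htr μ α (t ^ k * x)))
        + ((t ^ α)⁻¹) ^ N * ((Htr μ α (t * (t ^ N * x)) - Htr μ α (t ^ N * x))
            + (t ^ α)⁻¹ * Utail μ α (t * (t ^ N * x))) := by linarith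
    _ = _ := by rw [harr]; ring

include hα hsupp ht in
lemma iter_lower' {x : ℝ} (hx : 0 < x) (N : ℕ) :
    (∑ k ∈ Finset.range N, ((t ^ α)⁻¹) ^ (k + 1) *
        (Htr μ α (t * (t ^ k * x)) - Htr μ α (t ^ k * x)))
      + ((t ^ α)⁻¹) ^ N * Utail μ α (t ^ N * x) ≤ Utail μ α x := by
  have ht0 : (0:ℝ) < t := lt_trans one_pos ht
  have htα : (0:ℝ) < t ^ α := Real.rpow_pos_of_pos ht0 α
  induction N with
  | zero => simp
  | succ N ih =>
    have hxk : 0 < t ^ N * x := mul_pos (pow_pos ht0 N) hx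
    have hstep := step_lower μ hα hsupp ht hxk
    have hmul := mul_le_mul_of_nonneg_left hstep (le_of_lt (pow_pos (inv_pos.mpr htα) N))
    rw [Finset.sum_range_succ]
    have harr : t * (t ^ N * x) = t ^ (N + 1) * x := by ring
    rw [harr] at hmul
    have hps : ((t ^ α)⁻¹) ^ (N + 1) = ((t ^ α)⁻¹) ^ N * (t ^ α)⁻¹ := pow_succ _ _
    rw [harr, hps]
    nlinarith [hmul, ih]

include hα hsupp ht in
lemma iter_lower {x : ℝ} (hx : 0 < x) (N : ℕ) :
    (∑ k ∈ Finset.range N, ((t ^ α)⁻¹) ^ (k + 1) *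
        (Htr μ α (t * (t ^ k * x)) - Htr μ α (t ^ k * x)))
      ≤ Utail μ α x := by
  have ht0 : (0:ℝ) < t := lt_trans one_pos ht
  have htα : (0:ℝ) < t ^ α := Real.rpow_pos_of_pos ht0 α
  refine le_trans ?_ (iter_lower' μ hα hsupp ht hx N)
  have h0 : 0 ≤ ((t ^ α)⁻¹) ^ N * Utail μ α (t ^ N * x) :=
    mul_nonneg (le_of_lt (pow_pos (inv_pos.mpr htα) N))
      (Utail_nonneg μ (mul_pos (pow_pos ht0 N) hx).le)
  linarith

include hα hsupp in
lemma Htr_diff_nonneg {a b : ℝ} (ha : 0 ≤ a) (hab : a ≤ b) :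
    0 ≤ Htr μ α b - Htr μ α a := by
  rw [Htr_diff μ hα hsupp hab]
  exact setIntegral_nonneg measurableSet_Ioc
    (fun y hy => Real.rpow_nonneg (le_trans ha hy.1.le) α)

end iter

section key
variable (μ : Measure ℝ) [IsProbabilityMeasure μ] {α : ℝ}
variable (hα : 0 < α) (hsupp : μ (Iic 0) = 0) {t : ℝ} (ht : 1 < t)

include hα hsupp ht in
lemma key_bound (l : ℝ) (hl : 0 ≤ l) (L : ℝ → ℝ)
    (hLt : Tendsto (fun x => L (t * x) / L x) atTop (𝓝 1))
    (hht : Tendsto (fun x => (Htr μ α (t * x) - Htr μ α x) / L x) atTop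
      (𝓝 (α * l * Real.log t)))
    (ε : ℝ) (hε0 : 0 < ε) (hε1 : ε < 1) (hq : (t ^ α)⁻¹ * (1 + ε) < 1) :
    ∀ᶠ x in atTop, 0 < |L x| ∧
      Utail μ α x ≤ (α * l * Real.log t + ε) / (1 - (t ^ α)⁻¹ * (1 + ε)) * |L x| ∧
      max (α * l * Real.log t - ε) 0 * (t ^ α)⁻¹ / (1 - (t ^ α)⁻¹ * (1 - ε)) * |L x|
        ≤ Utail μ α x := by
  have ht0 : (0:ℝ) < t := lt_trans one_pos ht
  have htα : (0:ℝ) < t ^ α := Real.rpow_pos_of_pos ht0 α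
  have hτ0 : (0:ℝ) < (t ^ α)⁻¹ := inv_pos.mpr htα
  set β := α * l * Real.log t with hβdef
  have hβ : 0 ≤ β := mul_nonneg (mul_nonneg hα.le hl) (Real.log_nonneg ht.le)
  -- ratio of |L| tends to 1
  have hratio : Tendsto (fun x => |L (t * x)| / |L x|) atTop (𝓝 1) := by
    have := hLt.abs
    simpa [abs_div] using this
  -- eventually |L x| > 0
  have ev0 : ∀ᶠ x in atTop, 0 < |L x| := by
    filter_upwards [hratio.eventually (lt_mem_nhds (by norm_num : (1:ℝ)/2 < 1))] with x hx
    rcases eq_or_lt_of_le (abs_nonneg (L x)) with h0 | h0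
    · rw [← h0, div_zero] at hx; norm_num at hx
    · exact h0
  -- |Δ x / L x| = Δ x / |L x| for x > 0
  have evΔ : Tendsto (fun x => (Htr μ α (t * x) - Htr μ α x) / |L x|) atTop (𝓝 β) := by
    have h1 := hht.abs
    rw [abs_of_nonneg hβ] at h1
    apply h1.congr'
    filter_upwards [eventually_gt_atTop (0:ℝ)] with x hx
    rw [abs_div, abs_of_nonneg (Htr_diff_nonneg μ hα hsupp hx.le
      (le_mul_of_one_le_left hx.le ht.le))]
  -- collect the eventual estimates
  have evs : ∀ᶠ y in atTop, 0 < y ∧ 0 < |L y| ∧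
      (Htr μ α (t * y) - Htr μ α y) ≤ (β + ε) * |L y| ∧
      (β - ε) * |L y| ≤ (Htr μ α (t * y) - Htr μ α y) ∧
      |L (t * y)| ≤ (1 + ε) * |L y| ∧ (1 - ε) * |L y| ≤ |L (t * y)| := by
    have hΔball := evΔ.eventually (Metric.ball_mem_nhds β hε0)
    have hrball := hratio.eventually (Metric.ball_mem_nhds 1 hε0)
    filter_upwards [eventually_gt_atTop (0:ℝ), ev0, hΔball, hrball] with y hy hLy hΔ hr
    have hΔ' := abs_lt.mp (by simpa [Real.dist_eq] using hΔ)
    have hr' := abs_lt.mp (by simpa [Real.dist_eq] using hr)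
    refine ⟨hy, hLy, ?_, ?_, ?_, ?_⟩
    · have h2 : (Htr μ α (t * y) - Htr μ α y) / |L y| < β + ε := by linarith [hΔ'.2]
      exact le_of_lt ((div_lt_iff₀ hLy).mp h2)
    · have h2 : β - ε < (Htr μ α (t * y) - Htr μ α y) / |L y| := by linarith [hΔ'.1]
      exact le_of_lt ((lt_div_iff₀ hLy).mp h2)
    · have h2 : |L (t * y)| / |L y| < 1 + ε := by linarith [hr'.2]
      exact le_of_lt ((div_lt_iff₀ hLy).mp h2)
    · have h2 : 1 - ε < |L (t * y)| / |L y| := by linarith [hr'.1]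
      exact le_of_lt ((lt_div_iff₀ hLy).mp h2)
  rw [eventually_atTop] at evs
  obtain ⟨X, hX⟩ := evs
  filter_upwards [eventually_ge_atTop (max X 1)] with x hx
  have hx1 : (1:ℝ) ≤ x := le_trans (le_max_right X 1) hx
  have hxX : X ≤ x := le_trans (le_max_left X 1) hx
  have hx0 : 0 < x := lt_of_lt_of_le one_pos hx1
  have hLx : 0 < |L x| := (hX x hxX).2.1
  -- points t^k * x are ≥ X
  have hpt : ∀ k : ℕ, X ≤ t ^ k * x := fun k =>
    le_trans hxX (le_mul_of_one_le_left hx0.le (one_le_pow₀ ht.le))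
  -- chained bounds on |L|
  have hLup : ∀ k : ℕ, |L (t ^ k * x)| ≤ (1 + ε) ^ k * |L x| := by
    intro k
    induction k with
    | zero => simp
    | succ k ih =>
      have := (hX _ (hpt k)).2.2.2.2.1
      calc |L (t ^ (k+1) * x)| = |L (t * (t ^ k * x))| := by ring_nf
      _ ≤ (1 + ε) * |L (t ^ k * x)| := this
      _ ≤ (1 + ε) * ((1 + ε) ^ k * |L x|) :=
          mul_le_mul_of_nonneg_left ih (by linarith)
      _ = (1 + ε) ^ (k+1) * |L x| := by ring
  have hLlo : ∀ k : ℕ, (1 - ε) ^ k * |L x| ≤ |L (t ^ k * x)| := by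
    intro k
    induction k with
    | zero => simp
    | succ k ih =>
      have h2 := (hX _ (hpt k)).2.2.2.2.2
      calc (1 - ε) ^ (k+1) * |L x| = (1 - ε) * ((1 - ε) ^ k * |L x|) := by ring
      _ ≤ (1 - ε) * |L (t ^ k * x)| := mul_le_mul_of_nonneg_left ih (by linarith)
      _ ≤ |L (t * (t ^ k * x))| := h2
      _ = |L (t ^ (k+1) * x)| := by ring_nf
  refine ⟨hLx, ?_, ?_⟩
  · -- upper bound
    set q := (t ^ α)⁻¹ * (1 + ε) with hqdef
    have hq0 : 0 ≤ q := mul_nonneg hτ0.le (by linarith)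
    have hqlt : q < 1 := hq
    -- for every N
    have hN : ∀ N : ℕ, Utail μ α x ≤ (β + ε) / (1 - q) * |L x|
        + x ^ α * (1 - distF μ (t ^ N * x)) := by
      intro N
      have hiter := iter_upper μ hα hsupp ht hx0 N
      have hsum : (∑ k ∈ Finset.range N, ((t ^ α)⁻¹) ^ k *
          (Htr μ α (t * (t ^ k * x)) - Htr μ α (t ^ k * x)))
          ≤ (β + ε) / (1 - q) * |L x| := by
        have hterm : ∀ k ∈ Finset.range N, ((t ^ α)⁻¹) ^ k *
            (Htr μ α (t * (t ^ k * x)) - Htr μ α (t ^ k * x)) ≤ (β + ε) * |L x| * q ^ k := by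
          intro k _
          have h1 := (hX _ (hpt k)).2.2.1
          have h2 : (Htr μ α (t * (t ^ k * x)) - Htr μ α (t ^ k * x))
              ≤ (β + ε) * ((1 + ε) ^ k * |L x|) :=
            le_trans h1 (mul_le_mul_of_nonneg_left (hLup k) (by linarith))
          calc ((t ^ α)⁻¹) ^ k * (Htr μ α (t * (t ^ k * x)) - Htr μ α (t ^ k * x))
              ≤ ((t ^ α)⁻¹) ^ k * ((β + ε) * ((1 + ε) ^ k * |L x|)) :=
                mul_le_mul_of_nonneg_left h2 (pow_nonneg hτ0.le k)
          _ = (β + ε) * |L x| * q ^ k := by rw [hqdef, mul_pow]; ring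
        calc (∑ k ∈ Finset.range N, ((t ^ α)⁻¹) ^ k *
            (Htr μ α (t * (t ^ k * x)) - Htr μ α (t ^ k * x)))
            ≤ ∑ k ∈ Finset.range N, (β + ε) * |L x| * q ^ k := Finset.sum_le_sum hterm
        _ = (β + ε) * |L x| * (∑ k ∈ Finset.range N, q ^ k) := by
            rw [Finset.mul_sum]
        _ ≤ (β + ε) * |L x| * (1 - q)⁻¹ := by
            apply mul_le_mul_of_nonneg_left _ (mul_nonneg (by linarith) (abs_nonneg _))
            have hsummable := summable_geometric_of_lt_one hq0 hqlt
            have hle := Summable.sum_le_tsum (Finset.range N) (fun i _ => pow_nonneg hq0 i) hsummable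
            rwa [tsum_geometric_of_lt_one hq0 hqlt] at hle
        _ = (β + ε) / (1 - q) * |L x| := by ring
      have htail : ((t ^ α)⁻¹) ^ N * Utail μ α (t ^ N * x)
          = x ^ α * (1 - distF μ (t ^ N * x)) := by
        rw [Utail, pow_mul_rpow (α := α) ht hx0.le N]
        have : ((t ^ α)⁻¹) ^ N * (t ^ α) ^ N = 1 := by
          rw [← mul_pow, inv_mul_cancel₀ (ne_of_gt htα), one_pow]
        calc ((t ^ α)⁻¹) ^ N * ((t ^ α) ^ N * x ^ α * (1 - distF μ (t ^ N * x)))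
            = (((t ^ α)⁻¹) ^ N * (t ^ α) ^ N) * (x ^ α * (1 - distF μ (t ^ N * x))) := by ring
        _ = x ^ α * (1 - distF μ (t ^ N * x)) := by rw [this, one_mul]
      rw [htail] at hiter
      linarith [hsum, hiter]
    -- limit N → ∞
    have hlim : Tendsto (fun N : ℕ => (β + ε) / (1 - q) * |L x|
        + x ^ α * (1 - distF μ (t ^ N * x))) atTop
        (𝓝 ((β + ε) / (1 - q) * |L x|)) := by
      have h1 : Tendsto (fun N : ℕ => t ^ N * x) atTop atTop :=
        Tendsto.atTop_mul_const hx0 (tendsto_pow_atTop_atTop_of_one_lt ht)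
      have h2 : Tendsto (fun N : ℕ => distF μ (t ^ N * x)) atTop (𝓝 1) :=
        (distF_tendsto μ).comp h1
      have h3 : Tendsto (fun N : ℕ => x ^ α * (1 - distF μ (t ^ N * x))) atTop (𝓝 0) := by
        have := (tendsto_const_nhds (x := (1:ℝ)) (f := atTop (α := ℕ))).sub h2
        have := this.const_mul (x ^ α)
        simpa using this
      simpa using (tendsto_const_nhds.add h3)
    exact ge_of_tendsto hlim (Eventually.of_forall hN)
  · -- lower bound
    set c := max (β - ε) 0 with hcdef
    have hc0 : 0 ≤ c := le_max_right _ _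
    set r := (t ^ α)⁻¹ * (1 - ε) with hrdef
    have hr0 : 0 ≤ r := mul_nonneg hτ0.le (by linarith)
    have hrlt : r < 1 := by
      have h1 : (t ^ α)⁻¹ * (1 - ε) ≤ (t ^ α)⁻¹ * (1 + ε) :=
        mul_le_mul_of_nonneg_left (by linarith) hτ0.le
      exact lt_of_le_of_lt h1 hq
    have hN : ∀ N : ℕ, c * (t ^ α)⁻¹ * |L x| * (∑ k ∈ Finset.range N, r ^ k)
        ≤ Utail μ α x := by
      intro N
      refine le_trans ?_ (iter_lower μ hα hsupp ht hx0 N)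
      rw [Finset.mul_sum]
      apply Finset.sum_le_sum
      intro k _
      have hΔlo := (hX _ (hpt k)).2.2.2.1
      have hcLy : c * |L (t ^ k * x)| ≤ Htr μ α (t * (t ^ k * x)) - Htr μ α (t ^ k * x) := by
        have hy0 : 0 < t ^ k * x := mul_pos (pow_pos ht0 k) hx0
        rcases le_total (β - ε) 0 with hh | hh
        · rw [hcdef, max_eq_right hh, zero_mul]
          exact Htr_diff_nonneg μ hα hsupp hy0.le (le_mul_of_one_le_left hy0.le ht.le)
        · rw [hcdef, max_eq_left hh]
          exact hΔlo
      have hcLy2 : c * ((1 - ε) ^ k * |L x|) ≤ c * |L (t ^ k * x)| :=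
        mul_le_mul_of_nonneg_left (hLlo k) hc0
      calc c * (t ^ α)⁻¹ * |L x| * r ^ k
          = ((t ^ α)⁻¹) ^ (k + 1) * (c * ((1 - ε) ^ k * |L x|)) := by
            rw [hrdef, mul_pow, pow_succ]; ring
      _ ≤ ((t ^ α)⁻¹) ^ (k + 1) * (c * |L (t ^ k * x)|) :=
            mul_le_mul_of_nonneg_left hcLy2 (pow_nonneg hτ0.le _)
      _ ≤ ((t ^ α)⁻¹) ^ (k + 1) * (Htr μ α (t * (t ^ k * x)) - Htr μ α (t ^ k * x)) :=
            mul_le_mul_of_nonneg_left hcLy (pow_nonneg hτ0.le _)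
    have hlim : Tendsto (fun N : ℕ => c * (t ^ α)⁻¹ * |L x| * (∑ k ∈ Finset.range N, r ^ k))
        atTop (𝓝 (c * (t ^ α)⁻¹ * |L x| * (1 - r)⁻¹)) :=
      ((hasSum_geometric_of_lt_one hr0 hrlt).tendsto_sum_nat).const_mul _
    have hfin := le_of_tendsto hlim (Eventually.of_forall hN)
    calc c * (t ^ α)⁻¹ / (1 - r) * |L x| = c * (t ^ α)⁻¹ * |L x| * (1 - r)⁻¹ := by ring
    _ ≤ Utail μ α x := hfin

end key

lemma ratio_limit {α : ℝ} (hα : 0 < α) :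
    Tendsto (fun t : ℝ => α * Real.log t / (1 - (t ^ α)⁻¹)) (𝓝[>] 1) (𝓝 1) := by
  have hmono : 𝓝[>] (1:ℝ) ≤ 𝓝[≠] (1:ℝ) :=
    nhdsWithin_mono 1 (fun y hy => ne_of_gt hy)
  -- slope of log at 1
  have hlog : HasDerivAt Real.log 1 1 := by
    simpa using Real.hasDerivAt_log one_ne_zero
  have T1 : Tendsto (fun t : ℝ => Real.log t / (t - 1)) (𝓝[>] 1) (𝓝 1) := by
    have := (hasDerivAt_iff_tendsto_slope.mp hlog).mono_left hmono
    apply this.congr'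
    filter_upwards [self_mem_nhdsWithin] with y _
    simp [slope_def_field, Real.log_one]
  -- slope of 1 - t^(-α) at 1
  have hf : HasDerivAt (fun t : ℝ => 1 - t ^ (-α)) α 1 := by
    have h1 : HasDerivAt (fun t : ℝ => t ^ (-α)) (-α * (1:ℝ) ^ (-α - 1)) 1 :=
      Real.hasDerivAt_rpow_const (Or.inl one_ne_zero)
    have h2 := h1.const_sub 1
    simpa using h2
  have T2 : Tendsto (fun t : ℝ => (1 - t ^ (-α)) / (t - 1)) (𝓝[>] 1) (𝓝 α) := by
    have := (hasDerivAt_iff_tendsto_slope.mp hf).mono_left hmono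
    apply this.congr'
    filter_upwards [self_mem_nhdsWithin] with y _
    rw [slope_def_field]
    norm_num [Real.one_rpow]
  have T3 := T1.div T2 (ne_of_gt hα)
  have T4 : Tendsto (fun t : ℝ => Real.log t / (1 - t ^ (-α))) (𝓝[>] 1) (𝓝 (1 / α)) := by
    apply T3.congr'
    filter_upwards [self_mem_nhdsWithin] with y hy
    have hy1 : y - 1 ≠ 0 := sub_ne_zero.mpr (ne_of_gt hy)
    simp only [Pi.div_apply]
    rw [div_div_div_cancel_right₀ hy1]
  have T5 := T4.const_mul α
  have : α * (1 / α) = 1 := by field_simp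
  rw [this] at T5
  apply T5.congr'
  filter_upwards [self_mem_nhdsWithin] with y hy
  have hy0 : (0:ℝ) < y := lt_trans one_pos hy
  rw [← mul_div_assoc, Real.rpow_neg hy0.le]


theorem stmt13 (μ : Measure ℝ) [IsProbabilityMeasure μ] (hsupp : μ (Iic 0) = 0)
    (α : ℝ) (hα : 0 < α) (L : ℝ → ℝ) (hL : RegVary L 0)
    (l : ℝ) (hl : 0 ≤ l)
    (h : ∀ t : ℝ, 1 < t →
      Tendsto (fun x => (Htr μ α (t * x) - Htr μ α x) / L x) atTop
        (𝓝 (α * l * Real.log t))) :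
    Tendsto (fun x => x ^ α * (1 - distF μ x) / L x) atTop (𝓝 l) := by
  show Tendsto (fun x => Utail μ α x / L x) atTop (𝓝 l)
  -- first: convergence of Utail / |L|
  have Tabs : Tendsto (fun x => Utail μ α x / |L x|) atTop (𝓝 l) := by
    rw [Metric.tendsto_nhds]
    intro δ hδ
    -- step 1: choose t close to 1
    have hG := ratio_limit hα
    have hτc : Tendsto (fun t : ℝ => ((t : ℝ) ^ α)⁻¹) (𝓝[>] 1) (𝓝 1) := by
      have h1 : Tendsto (fun t : ℝ => (t : ℝ) ^ α) (𝓝 1) (𝓝 1) := by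
        simpa [Real.one_rpow] using (Real.continuous_rpow_const hα.le).tendsto 1
      simpa using (h1.inv₀ one_ne_zero).mono_left nhdsWithin_le_nhds
    have hA : Tendsto (fun t : ℝ => l * (α * Real.log t / (1 - ((t:ℝ) ^ α)⁻¹)))
        (𝓝[>] 1) (𝓝 l) := by simpa using hG.const_mul l
    have hB : Tendsto (fun t : ℝ => l * (α * Real.log t / (1 - ((t:ℝ) ^ α)⁻¹)) * ((t:ℝ)^α)⁻¹)
        (𝓝[>] 1) (𝓝 l) := by simpa using (hG.const_mul l).mul hτc
    have hevt : ∀ᶠ t : ℝ in 𝓝[>] 1, 1 < t ∧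
        l * (α * Real.log t / (1 - ((t:ℝ) ^ α)⁻¹)) < l + δ/2 ∧
        l - δ/2 < l * (α * Real.log t / (1 - ((t:ℝ) ^ α)⁻¹)) * ((t:ℝ)^α)⁻¹ := by
      filter_upwards [self_mem_nhdsWithin,
        hA.eventually_lt_const (by linarith : l < l + δ/2),
        hB.eventually_const_lt (by linarith : l - δ/2 < l)] with t h1 h2 h3
      exact ⟨h1, h2, h3⟩
    obtain ⟨t, ht, hAt, hBt⟩ := hevt.exists
    have ht0 : (0:ℝ) < t := lt_trans one_pos ht
    have htα : (1:ℝ) < t ^ α := by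
      rw [Real.one_lt_rpow_iff_of_pos ht0]; exact Or.inl ⟨ht, hα⟩
    have hτ1 : (t ^ α)⁻¹ < 1 := by
      rw [inv_lt_one_iff₀]; exact Or.inr htα
    have hτ0 : (0:ℝ) < (t ^ α)⁻¹ := inv_pos.mpr (lt_trans one_pos htα)
    have hD : (0:ℝ) < 1 - (t ^ α)⁻¹ := by linarith
    set β := α * l * Real.log t with hβdef
    have hβ : 0 ≤ β := mul_nonneg (mul_nonneg hα.le hl) (Real.log_nonneg ht.le)
    have hArw : β / (1 - (t ^ α)⁻¹) < l + δ/2 := by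
      have : l * (α * Real.log t / (1 - (t ^ α)⁻¹)) = β / (1 - (t ^ α)⁻¹) := by
        rw [hβdef]; ring
      rwa [this] at hAt
    have hBrw : l - δ/2 < β * (t ^ α)⁻¹ / (1 - (t ^ α)⁻¹) := by
      have : l * (α * Real.log t / (1 - (t ^ α)⁻¹)) * (t ^ α)⁻¹
          = β * (t ^ α)⁻¹ / (1 - (t ^ α)⁻¹) := by
        rw [hβdef]; ring
      rwa [this] at hBt
    -- step 2: choose ε
    have hup : Tendsto (fun ε : ℝ => (β + ε) / (1 - (t ^ α)⁻¹ * (1 + ε))) (𝓝[>] 0)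
        (𝓝 (β / (1 - (t ^ α)⁻¹))) := by
      have Tnum : Tendsto (fun ε : ℝ => β + ε) (𝓝 0) (𝓝 β) := by
        have : Continuous (fun ε : ℝ => β + ε) := continuous_const.add continuous_id
        simpa using this.tendsto 0
      have Tden : Tendsto (fun ε : ℝ => 1 - (t ^ α)⁻¹ * (1 + ε)) (𝓝 0)
          (𝓝 (1 - (t ^ α)⁻¹)) := by
        have : Continuous (fun ε : ℝ => 1 - (t ^ α)⁻¹ * (1 + ε)) :=
          continuous_const.sub (continuous_const.mul (continuous_const.add continuous_id))
        simpa using this.tendsto 0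
      exact (Tnum.div Tden (ne_of_gt hD)).mono_left nhdsWithin_le_nhds
    have hlo : Tendsto (fun ε : ℝ => max (β - ε) 0 * (t ^ α)⁻¹ / (1 - (t ^ α)⁻¹ * (1 - ε)))
        (𝓝[>] 0) (𝓝 (β * (t ^ α)⁻¹ / (1 - (t ^ α)⁻¹))) := by
      have Tnum : Tendsto (fun ε : ℝ => max (β - ε) 0 * (t ^ α)⁻¹) (𝓝 0)
          (𝓝 (β * (t ^ α)⁻¹)) := by
        have h1 : Tendsto (fun ε : ℝ => β - ε) (𝓝 0) (𝓝 β) := by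
          have : Continuous (fun ε : ℝ => β - ε) := continuous_const.sub continuous_id
          simpa using this.tendsto 0
        have h2 := (h1.max (tendsto_const_nhds (x := (0:ℝ)) (f := 𝓝 (0:ℝ)))).mul_const ((t ^ α)⁻¹)
        rwa [max_eq_left hβ] at h2
      have Tden : Tendsto (fun ε : ℝ => 1 - (t ^ α)⁻¹ * (1 - ε)) (𝓝 0)
          (𝓝 (1 - (t ^ α)⁻¹)) := by
        have : Continuous (fun ε : ℝ => 1 - (t ^ α)⁻¹ * (1 - ε)) :=
          continuous_const.sub (continuous_const.mul (continuous_const.sub continuous_id))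
        simpa using this.tendsto 0
      exact (Tnum.div Tden (ne_of_gt hD)).mono_left nhdsWithin_le_nhds
    have hqc : Tendsto (fun ε : ℝ => (t ^ α)⁻¹ * (1 + ε)) (𝓝[>] 0) (𝓝 ((t ^ α)⁻¹)) := by
      have hc : Continuous (fun ε : ℝ => (t ^ α)⁻¹ * (1 + ε)) :=
        continuous_const.mul (continuous_const.add continuous_id)
      have := (hc.tendsto 0).mono_left (nhdsWithin_le_nhds (s := Ioi (0:ℝ)))
      simpa using this
    have hevε : ∀ᶠ ε : ℝ in 𝓝[>] 0, 0 < ε ∧ ε < 1 ∧ (t ^ α)⁻¹ * (1 + ε) < 1 ∧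
        (β + ε) / (1 - (t ^ α)⁻¹ * (1 + ε)) < l + δ ∧
        l - δ < max (β - ε) 0 * (t ^ α)⁻¹ / (1 - (t ^ α)⁻¹ * (1 - ε)) := by
      filter_upwards [self_mem_nhdsWithin,
        (tendsto_id.mono_left nhdsWithin_le_nhds).eventually_lt_const one_pos,
        hqc.eventually_lt_const hτ1,
        hup.eventually_lt_const (by linarith : β / (1 - (t ^ α)⁻¹) < l + δ),
        hlo.eventually_const_lt (by linarith : l - δ < β * (t ^ α)⁻¹ / (1 - (t ^ α)⁻¹))]
        with ε h1 h2 h3 h4 h5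
      exact ⟨h1, h2, h3, h4, h5⟩
    obtain ⟨ε, hε0, hε1, hq, hC1, hC2⟩ := hevε.exists
    -- apply key_bound
    have hLt : Tendsto (fun x => L (t * x) / L x) atTop (𝓝 1) := by
      simpa [Real.rpow_zero] using hL t ht0
    have hkb := key_bound μ hα hsupp ht l hl L hLt (h t ht) ε hε0 hε1 hq
    filter_upwards [hkb] with x hx
    obtain ⟨hLx, hub, hlb⟩ := hx
    rw [Real.dist_eq, abs_lt]
    constructor
    · have h1 : l - δ < max (β - ε) 0 * (t ^ α)⁻¹ / (1 - (t ^ α)⁻¹ * (1 - ε)) := hC2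
      have h2 : max (β - ε) 0 * (t ^ α)⁻¹ / (1 - (t ^ α)⁻¹ * (1 - ε)) ≤ Utail μ α x / |L x| :=
        (le_div_iff₀ hLx).mpr hlb
      linarith
    · have h2 : Utail μ α x / |L x| ≤ (β + ε) / (1 - (t ^ α)⁻¹ * (1 + ε)) :=
        (div_le_iff₀ hLx).mpr hub
      linarith
  -- now convert |L| to L
  rcases eq_or_lt_of_le hl with hl0 | hlpos
  · -- l = 0
    rw [← hl0] at Tabs ⊢
    have habs : (fun x => Utail μ α x / |L x|) =ᶠ[atTop] (fun x => |Utail μ α x / L x|) := by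
      filter_upwards [eventually_ge_atTop (0:ℝ)] with x hx
      rw [abs_div, abs_of_nonneg (Utail_nonneg μ hx)]
    have h1 : Tendsto (fun x => |Utail μ α x / L x|) atTop (𝓝 0) := Tabs.congr' habs
    exact (tendsto_zero_iff_abs_tendsto_zero (l := atTop) (fun x => Utail μ α x / L x)).mpr h1
  · -- l > 0
    have hβ2 : (0:ℝ) < α * l * Real.log 2 :=
      mul_pos (mul_pos hα hlpos) (Real.log_pos one_lt_two)
    have hevL : ∀ᶠ x in atTop, 0 < L x := by
      have hh := (h 2 one_lt_two).eventually_const_lt (half_lt_self hβ2)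
      filter_upwards [hh, eventually_gt_atTop (0:ℝ)] with x h1 h2
      by_contra hcon
      push_neg at hcon
      have hΔ : 0 ≤ Htr μ α (2 * x) - Htr μ α x :=
        Htr_diff_nonneg μ hα hsupp h2.le (by linarith)
      rcases eq_or_lt_of_le hcon with he | hlt
      · rw [he, div_zero] at h1; linarith
      · have : (Htr μ α (2 * x) - Htr μ α x) / L x ≤ 0 := div_nonpos_of_nonneg_of_nonpos hΔ hcon
        linarith
    apply Tabs.congr'
    filter_upwards [hevL] with x hx
    rw [abs_of_pos hx]
end
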